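/- arXiv:1102.2886 — 11 statements merged into one kernel-verified Lean document; each statement's English description precedes it below -/
import Mathlib

section
/- Let $q \geq 1$ and $b \geq 1$ be integers, and let $\alpha^1,\ldots,\alpha^b \in \mathbb{R}^q$ be vectors such that for each $i$, $\sum_{j=1}^q \alpha^i_j = 1$ and $0 \leq \alpha^i_j \leq 1/(q-1)$ for all $j$. Then $\sum_{j=1}^q \prod_{i=1}^b \alpha^i_j \geq (q-b)/(q-1)^b$. -/
lemma weier_aux {ι : Type*} [DecidableEq ι] (s : Finset ι) (x : ι → ℝ) :
    (∀ i ∈ s, 0 ≤ x i) → (∀ i ∈ s, x i ≤ 1) →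
    1 - ∑ i ∈ s, (1 - x i) ≤ ∏ i ∈ s, x i := by
  induction s using Finset.induction_on with
  | empty => intro _ _; simp
  | @insert a s ha ih =>
    intro h0 h1
    have h0a : 0 ≤ x a := h0 a (Finset.mem_insert_self a s)
    have h1a : x a ≤ 1 := h1 a (Finset.mem_insert_self a s)
    have h0' : ∀ i ∈ s, 0 ≤ x i := fun i hi => h0 i (Finset.mem_insert_of_mem hi)
    have h1' : ∀ i ∈ s, x i ≤ 1 := fun i hi => h1 i (Finset.mem_insert_of_mem hi)
    have hS : 0 ≤ ∑ i ∈ s, (1 - x i) :=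
      Finset.sum_nonneg fun i hi => by linarith [h1' i hi]
    have hP := ih h0' h1'
    rw [Finset.sum_insert ha, Finset.prod_insert ha]
    have : x a * (1 - ∑ i ∈ s, (1 - x i)) ≤ x a * ∏ i ∈ s, x i :=
      mul_le_mul_of_nonneg_left hP h0a
    nlinarith

theorem stmt_0 (q b : ℕ) (hq : 1 < q) (hb : 1 ≤ b)
    (α : Fin b → Fin q → ℝ)
    (hsum : ∀ i, ∑ j, α i j = 1)
    (hnn : ∀ i j, 0 ≤ α i j)
    (hub : ∀ i j, α i j ≤ 1 / ((q : ℝ) - 1)) :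
    ∑ j, ∏ i, α i j ≥ ((q : ℝ) - b) / ((q : ℝ) - 1) ^ b := by
  set c : ℝ := (q : ℝ) - 1 with hc
  have hc0 : 0 < c := by
    have : (1 : ℝ) < q := by exact_mod_cast hq
    simp [hc]; linarith
  have hcb : 0 < c ^ b := pow_pos hc0 b
  have key : ∀ j, (1 - ∑ i, (1 - c * α i j)) / c ^ b ≤ ∏ i, α i j := by
    intro j
    rw [div_le_iff₀ hcb]
    have haux := weier_aux Finset.univ (fun i => c * α i j)
      (fun i _ => mul_nonneg hc0.le (hnn i j))
      (fun i _ => by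
        have := hub i j
        rw [le_div_iff₀ hc0] at this
        simpa [mul_comm] using this)
    have hprod : ∏ i, (c * α i j) = c ^ b * ∏ i, α i j := by
      rw [Finset.prod_mul_distrib, Finset.prod_const, Finset.card_univ, Fintype.card_fin]
    rw [hprod] at haux
    linarith
  have hge : ∑ j, (1 - ∑ i, (1 - c * α i j)) / c ^ b ≤ ∑ j, ∏ i, α i j :=
    Finset.sum_le_sum fun j _ => key j
  have heq : ∑ j, (1 - ∑ i, (1 - c * α i j)) / c ^ b = ((q : ℝ) - b) / c ^ b := by
    rw [← Finset.sum_div]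
    congr 1
    rw [Finset.sum_sub_distrib, Finset.sum_const, Finset.card_univ, Fintype.card_fin,
      Finset.sum_comm]
    have : ∀ i : Fin b, ∑ j, (1 - c * α i j) = 1 := by
      intro i
      rw [Finset.sum_sub_distrib, ← Finset.mul_sum, hsum, Finset.sum_const, Finset.card_univ,
        Fintype.card_fin]
      simp [hc]
    rw [Finset.sum_congr rfl fun i _ => this i, Finset.sum_const, Finset.card_univ,
      Fintype.card_fin]
    simp
  rw [ge_iff_le, ← heq]
  exact hge
end

section
/- Let $q > b \geq 1$ be integers and let $\alpha^1,\ldots,\alpha^b \in \mathbb{R}^q$ be probability vectors satisfying $\frac{1}{q-1}(1-\frac{1}{q-b}) \leq \alpha^i_j \leq \frac{1}{q-1}$ for all $i,j$. Then $\sum_{j=1}^q \prod_{i=1}^b \alpha^i_j \geq \frac{q}{(q-1)^b}\left(1-\frac{1}{q-b}\right)^{b - b^2/q}$. -/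
/-!
Write each entry as `α = c (1 - t ε)` with `c = 1/(q-1)`, `ε = 1/(q-b)` and `t ∈ [0, 1]`.
Bernoulli's inequality `(1 - ε) ^ t ≤ 1 - t ε` gives `α ≥ c (1 - ε) ^ t`, so each product
`∏ᵢ αᵢⱼ` is at least `c ^ b (1 - ε) ^ Tⱼ` with `Tⱼ = ∑ᵢ tᵢⱼ`. By AM-GM the sum over `j` of these
is at least `q c ^ b (1 - ε) ^ (∑ⱼ Tⱼ / q)`, and the row sums `∑ⱼ αᵢⱼ = 1` force
`∑ⱼ Tⱼ = b (q - b)`, whence the exponent `b - b² / q`.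
-/

open Finset Real

lemma mul_one_sub_rpow_le {c ε x : ℝ} (hc : 0 < c) (hε : 0 < ε) (hε1 : ε ≤ 1)
    (hlo : c * (1 - ε) ≤ x) (hhi : x ≤ c) :
    c * (1 - ε) ^ ((1 - x / c) / ε) ≤ x := by
  have ht0 : 0 ≤ (1 - x / c) / ε :=
    div_nonneg (by rw [sub_nonneg, div_le_one hc]; exact hhi) hε.le
  have ht1 : (1 - x / c) / ε ≤ 1 := by
    rw [div_le_one hε, sub_le_comm, le_div_iff₀ hc, mul_comm]; exact hlo
  have bernoulli := rpow_one_add_le_one_add_mul_self (s := -ε) (by linarith) ht0 ht1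
  calc c * (1 - ε) ^ ((1 - x / c) / ε)
      ≤ c * (1 + (1 - x / c) / ε * -ε) := by
        rw [← sub_eq_add_neg] at bernoulli; gcongr
    _ = x := by field_simp; ring

lemma card_mul_rpow_mean_le_sum_rpow {κ : Type*} [Fintype κ] [Nonempty κ] {a : ℝ} (ha : 0 ≤ a)
    {T : κ → ℝ} (hT : ∀ j, 0 ≤ T j) :
    Fintype.card κ * a ^ ((∑ j, T j) / Fintype.card κ) ≤ ∑ j, a ^ T j := by
  have hn : (0 : ℝ) < Fintype.card κ := by exact_mod_cast Fintype.card_pos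
  have amgm := geom_mean_le_arith_mean_weighted univ (fun _ => 1 / (Fintype.card κ : ℝ))
    (fun j => a ^ T j) (fun _ _ => by positivity) (by simp [hn.ne'])
    (fun j _ => rpow_nonneg ha _)
  have hgeom : ∏ j, (a ^ T j) ^ (1 / (Fintype.card κ : ℝ)) =
      a ^ ((∑ j, T j) / Fintype.card κ) := by
    rw [sum_div, rpow_sum_of_nonneg ha fun j _ => div_nonneg (hT j) hn.le]
    exact prod_congr rfl fun j _ => by rw [← rpow_mul ha, mul_one_div]
  rw [hgeom, ← mul_sum] at amgm
  rwa [one_div_mul_eq_div, le_div_iff₀' hn] at amgm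

theorem card_mul_pow_mul_rpow_le_sum_prod {ι κ : Type*} [Fintype ι] [Fintype κ] [Nonempty κ]
    {c ε : ℝ} (hc : 0 < c) (hε : 0 < ε) (hε1 : ε ≤ 1) (α : ι → κ → ℝ)
    (hlo : ∀ i j, c * (1 - ε) ≤ α i j) (hhi : ∀ i j, α i j ≤ c) :
    Fintype.card κ * c ^ Fintype.card ι *
        (1 - ε) ^ ((∑ i, ∑ j, (1 - α i j / c) / ε) / Fintype.card κ) ≤ ∑ j, ∏ i, α i j := by
  set t : ι → κ → ℝ := fun i j => (1 - α i j / c) / ε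
  have ht : ∀ i j, 0 ≤ t i j := fun i j =>
    div_nonneg (by rw [sub_nonneg, div_le_one hc]; exact hhi i j) hε.le
  have ha : 0 ≤ 1 - ε := by linarith
  calc Fintype.card κ * c ^ Fintype.card ι * (1 - ε) ^ ((∑ i, ∑ j, t i j) / Fintype.card κ)
      = c ^ Fintype.card ι *
          (Fintype.card κ * (1 - ε) ^ ((∑ j, ∑ i, t i j) / Fintype.card κ)) := by
        rw [sum_comm]; ring
    _ ≤ c ^ Fintype.card ι * ∑ j, (1 - ε) ^ (∑ i, t i j) := by
        gcongr
        exact card_mul_rpow_mean_le_sum_rpow ha fun j => sum_nonneg fun i _ => ht i j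
    _ = ∑ j, ∏ i, c * (1 - ε) ^ t i j := by
        rw [mul_sum]
        refine sum_congr rfl fun j _ => ?_
        rw [prod_mul_distrib, prod_const, card_univ, rpow_sum_of_nonneg ha fun i _ => ht i j]
    _ ≤ ∑ j, ∏ i, α i j := by
        gcongr with j _ i _
        exact mul_one_sub_rpow_le hc hε hε1 (hlo i j) (hhi i j)

theorem stmt_3 (q b : ℕ) (hb : 1 ≤ b) (hqb : b < q)
    (α : Fin b → Fin q → ℝ)
    (hsum : ∀ i, ∑ j, α i j = 1)
    (hlb : ∀ i j, (1 / ((q : ℝ) - 1)) * (1 - 1 / ((q : ℝ) - b)) ≤ α i j)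
    (hub : ∀ i j, α i j ≤ 1 / ((q : ℝ) - 1)) :
    ∑ j, ∏ i, α i j ≥
      ((q : ℝ) / ((q : ℝ) - 1) ^ b) *
        (1 - 1 / ((q : ℝ) - b)) ^ ((b : ℝ) - (b : ℝ) ^ 2 / (q : ℝ)) := by
  have hqb' : (b : ℝ) + 1 ≤ q := by exact_mod_cast hqb
  have hq1 : (0 : ℝ) < q - 1 := by linarith [(Nat.one_le_cast.2 hb : (1 : ℝ) ≤ b)]
  have hqb1 : (1 : ℝ) ≤ q - b := by linarith
  have : NeZero q := ⟨by omega⟩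
  have key := card_mul_pow_mul_rpow_le_sum_prod (one_div_pos.2 hq1)
    (one_div_pos.2 (by linarith)) (div_le_one_of_le₀ hqb1 (by linarith)) α hlb hub
  have hrow : ∀ i, ∑ j, (1 - α i j / (1 / ((q : ℝ) - 1))) / (1 / ((q : ℝ) - b)) = q - b := by
    intro i
    simp only [div_div_eq_mul_div, div_one, ← sum_mul, sum_sub_distrib, hsum]
    simp
  simp only [hrow, sum_const, card_univ, Fintype.card_fin, nsmul_eq_mul] at key
  have hcoef : (q : ℝ) / ((q : ℝ) - 1) ^ b = q * (1 / ((q : ℝ) - 1)) ^ b := by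
    rw [one_div_pow, mul_one_div]
  have hexp : (b : ℝ) * (q - b) / q = b - (b : ℝ) ^ 2 / q := by
    have hq : (q : ℝ) ≠ 0 := by linarith
    field_simp
  rw [ge_iff_le, hcoef, ← hexp]
  exact key
end

section
/- Let $q > b \geq 1$ and $0 \leq s \leq b$ be integers. Let $\alpha^1,\ldots,\alpha^{b-s} \in \mathbb{R}^q$ be probability vectors with $\frac{1}{q-1}(1-\frac{1}{q-b}) \leq \alpha^i_j \leq \frac{1}{q-1}$ for all entries, and let $\alpha^{b-s+1},\ldots,\alpha^b$ each be a permutation of $(0,\frac{1}{q-1},\ldots,\frac{1}{q-1})$. Then $\sum_{j=1}^q \prod_{i=1}^b \alpha^i_j \geq \frac{q-s}{(q-1)^b}\left(1-\frac{1}{q-b}\right)^{(b-s) - (b-s)^2/(q-s)}$. -/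
/-!
Write every entry of a free row as `α = c * (1 - (1 - t) * x)` with `c = 1/(q-1)` and
`t = 1 - 1/(q-b)`: the entry bounds say `x ∈ [0, 1]`, and `∑ α = 1` says that the deficits `x`
of a row add up to `q - b`. Bernoulli's inequality gives `1 - (1 - t) * x ≥ t ^ x`. Discard the at
most `s` columns in which a fixed row vanishes; on the remaining `q - s` columns every fixed row
equals `c`, so the product down column `j` is at least `c ^ b * t ^ y j`, where the column
deficits `y j` add up to at most `(b - s) * (q - b)`. By AM-GM, `∑ j, t ^ y j ≥ (q - s) * t ^ E`
with `E = (b - s) * (q - b) / (q - s)`, which equals `(b - s) - (b - s) ^ 2 / (q - s)`.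
-/

open Finset

namespace Real

lemma rpow_le_one_sub_mul {t x : ℝ} (ht : 0 ≤ t) (hx0 : 0 ≤ x) (hx1 : x ≤ 1) :
    t ^ x ≤ 1 - (1 - t) * x := by
  have h := rpow_one_add_le_one_add_mul_self (s := t - 1) (by linarith) hx0 hx1
  rw [add_sub_cancel] at h
  linarith

lemma card_mul_rpow_le_sum_rpow {κ : Type*} (K : Finset κ) {t E : ℝ} (ht0 : 0 ≤ t)
    (ht1 : t ≤ 1) {y : κ → ℝ} (hy : ∀ j ∈ K, 0 ≤ y j) (hE : ∑ j ∈ K, y j ≤ #K * E) :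
    #K * t ^ E ≤ ∑ j ∈ K, t ^ y j := by
  rcases K.eq_empty_or_nonempty with rfl | hK
  · simp
  have hn : (0 : ℝ) < #K := by exact_mod_cast hK.card_pos
  have hw : (0 : ℝ) ≤ (#K : ℝ)⁻¹ := inv_nonneg.2 hn.le
  have hm0 : 0 ≤ (∑ j ∈ K, y j) * (#K : ℝ)⁻¹ := mul_nonneg (sum_nonneg hy) hw
  have hmE : (∑ j ∈ K, y j) * (#K : ℝ)⁻¹ ≤ E := by
    rw [← div_eq_mul_inv, div_le_iff₀' hn]
    exact hE
  have amgm := geom_mean_le_arith_mean_weighted K (fun _ => (#K : ℝ)⁻¹)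
    (fun j => t ^ y j) (fun _ _ => hw) (by simp [hn.ne']) (fun _ _ => rpow_nonneg ht0 _)
  have hprod : ∏ j ∈ K, (t ^ y j) ^ (#K : ℝ)⁻¹ = t ^ ((∑ j ∈ K, y j) * (#K : ℝ)⁻¹) := by
    rw [sum_mul, rpow_sum_of_nonneg ht0 fun j hj => mul_nonneg (hy j hj) hw]
    exact prod_congr rfl fun j _ => (rpow_mul ht0 _ _).symm
  calc #K * t ^ E ≤ #K * t ^ ((∑ j ∈ K, y j) * (#K : ℝ)⁻¹) :=
        mul_le_mul_of_nonneg_left (rpow_le_rpow_of_exponent_ge' ht0 ht1 hm0 hmE) hn.le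
    _ ≤ #K * ∑ j ∈ K, (#K : ℝ)⁻¹ * t ^ y j :=
        mul_le_mul_of_nonneg_left (hprod ▸ amgm) hn.le
    _ = ∑ j ∈ K, t ^ y j := by
        rw [← mul_sum, mul_inv_cancel_left₀ hn.ne']

lemma card_mul_rpow_le_sum_prod_one_sub_mul {ι κ : Type*} [Fintype ι] (K : Finset κ)
    {t E : ℝ} (ht0 : 0 ≤ t) (ht1 : t ≤ 1) (x : ι → κ → ℝ)
    (hx : ∀ i, ∀ j ∈ K, 0 ≤ x i j ∧ x i j ≤ 1) (hE : ∑ j ∈ K, ∑ i, x i j ≤ #K * E) :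
    #K * t ^ E ≤ ∑ j ∈ K, ∏ i, (1 - (1 - t) * x i j) :=
  calc #K * t ^ E ≤ ∑ j ∈ K, t ^ ∑ i, x i j :=
        card_mul_rpow_le_sum_rpow K ht0 ht1 (fun j hj => sum_nonneg fun i _ => (hx i j hj).1) hE
    _ = ∑ j ∈ K, ∏ i, t ^ x i j :=
        sum_congr rfl fun j hj => rpow_sum_of_nonneg ht0 fun i _ => (hx i j hj).1
    _ ≤ ∑ j ∈ K, ∏ i, (1 - (1 - t) * x i j) :=
        sum_le_sum fun j hj => prod_le_prod (fun _ _ => rpow_nonneg ht0 _)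
          fun i _ => rpow_le_one_sub_mul ht0 (hx i j hj).1 (hx i j hj).2

end Real

lemma Finset.exists_card_eq_card_sub_forall_eq {ι κ β : Type*} [Fintype κ] (F : Finset ι)
    (f : ι → κ → β) (c : β) (h : ∀ i ∈ F, ∃ k, ∀ j, j ≠ k → f i j = c) :
    ∃ K : Finset κ, #K = Fintype.card κ - #F ∧ ∀ i ∈ F, ∀ j ∈ K, f i j = c := by
  classical
  set Z := F.biUnion fun i => {j | f i j ≠ c}
  have hrow : ∀ i ∈ F, #{j | f i j ≠ c} ≤ 1 := fun i hi => by
    obtain ⟨k, hk⟩ := h i hi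
    refine card_le_one.2 fun j hj j' hj' => ?_
    simp only [mem_filter, mem_univ, true_and] at hj hj'
    exact (not_imp_comm.1 (hk j) hj).trans (not_imp_comm.1 (hk j') hj').symm
  have hZ : #Z ≤ #F := card_biUnion_le.trans (by simpa using sum_le_sum hrow)
  obtain ⟨K, hKZ, hK⟩ := exists_subset_card_eq (s := Zᶜ) (n := Fintype.card κ - #F)
    (by rw [card_compl]; omega)
  refine ⟨K, hK, fun i hi j hj => ?_⟩
  by_contra hne
  exact mem_compl.1 (hKZ hj) (mem_biUnion.2 ⟨i, hi, by simpa using hne⟩)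

lemma sum_sum_le_card_filter_mul {ι κ : Type*} [Fintype ι] [Fintype κ] (p : ι → Prop)
    [DecidablePred p] (K : Finset κ) (x : ι → κ → ℝ) {r : ℝ}
    (hp : ∀ i, p i → (∀ j, 0 ≤ x i j) ∧ ∑ j, x i j = r) (hnp : ∀ i, ¬ p i → ∀ j ∈ K, x i j = 0) :
    ∑ j ∈ K, ∑ i, x i j ≤ #{i | p i} * r := by
  rw [sum_comm, ← nsmul_eq_mul, ← sum_const, ← sum_filter_add_sum_filter_not univ p]
  have hzero : ∑ i with ¬ p i, ∑ j ∈ K, x i j = 0 :=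
    sum_eq_zero fun i hi => sum_eq_zero (hnp i (mem_filter.1 hi).2)
  rw [hzero, add_zero]
  refine sum_le_sum fun i hi => ?_
  obtain ⟨hx0, hxr⟩ := hp i (mem_filter.1 hi).2
  exact hxr ▸ sum_le_univ_sum_of_nonneg hx0

noncomputable def deficit (c t a : ℝ) : ℝ := (c - a) / (c * (1 - t))

section deficit

variable {c t a : ℝ}

lemma deficit_self : deficit c t c = 0 := by
  rw [deficit, sub_self, zero_div]

lemma deficit_mem_Icc (hc : 0 < c) (ht : t < 1) (ha : c * t ≤ a ∧ a ≤ c) :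
    0 ≤ deficit c t a ∧ deficit c t a ≤ 1 := by
  have hpos : 0 < c * (1 - t) := mul_pos hc (sub_pos.2 ht)
  refine ⟨div_nonneg (sub_nonneg.2 ha.2) hpos.le, (div_le_one hpos).2 ?_⟩
  linarith [ha.1]

lemma mul_one_sub_mul_deficit (hc : c ≠ 0) (ht : t ≠ 1) :
    c * (1 - (1 - t) * deficit c t a) = a := by
  have : 1 - t ≠ 0 := sub_ne_zero.2 (Ne.symm ht)
  rw [deficit]
  field_simp
  ring

lemma sum_deficit {κ : Type*} [Fintype κ] {v : κ → ℝ} (hv : ∑ j, v j = 1) :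
    ∑ j, deficit c t (v j) = (Fintype.card κ * c - 1) / (c * (1 - t)) := by
  simp only [deficit, ← sum_div, sum_sub_distrib, hv, sum_const, card_univ, nsmul_eq_mul]

end deficit

lemma pow_card_mul_card_mul_rpow_le_sum_prod {ι κ : Type*} [Fintype ι] [Fintype κ]
    {α : ι → κ → ℝ} {K : Finset κ} {c t E : ℝ} (hc : 0 < c) (ht0 : 0 ≤ t) (ht1 : t < 1)
    (hα : ∀ i j, 0 ≤ α i j) (hK : ∀ i, ∀ j ∈ K, c * t ≤ α i j ∧ α i j ≤ c)
    (hE : ∑ j ∈ K, ∑ i, deficit c t (α i j) ≤ #K * E) :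
    c ^ Fintype.card ι * (#K * t ^ E) ≤ ∑ j, ∏ i, α i j :=
  calc c ^ Fintype.card ι * (#K * t ^ E)
      ≤ c ^ Fintype.card ι * ∑ j ∈ K, ∏ i, (1 - (1 - t) * deficit c t (α i j)) :=
        mul_le_mul_of_nonneg_left (Real.card_mul_rpow_le_sum_prod_one_sub_mul K ht0 ht1.le _
          (fun i j hj => deficit_mem_Icc hc ht1 (hK i j hj)) hE) (by positivity)
    _ = ∑ j ∈ K, ∏ i, α i j := by
        rw [mul_sum, ← card_univ]
        refine sum_congr rfl fun j _ => ?_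
        rw [pow_card_mul_prod]
        exact prod_congr rfl fun i _ => mul_one_sub_mul_deficit hc.ne' ht1.ne
    _ ≤ ∑ j, ∏ i, α i j := sum_le_univ_sum_of_nonneg fun j => prod_nonneg fun i _ => hα i j

theorem pow_card_mul_card_mul_rpow_le_sum_prod_of_rows {ι κ : Type*} [Fintype ι] [Fintype κ]
    (p : ι → Prop) [DecidablePred p] {α : ι → κ → ℝ} {c t E : ℝ} (hc : 0 < c) (ht0 : 0 ≤ t)
    (ht1 : t < 1) (hsum : ∀ i, ∑ j, α i j = 1)
    (hfree : ∀ i, p i → ∀ j, c * t ≤ α i j ∧ α i j ≤ c)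
    (hfixed : ∀ i, ¬ p i → ∃ k, α i k = 0 ∧ ∀ j, j ≠ k → α i j = c)
    (hE : #{i | p i} * ((Fintype.card κ * c - 1) / (c * (1 - t))) ≤
      ((Fintype.card κ - #{i | ¬ p i} : ℕ) : ℝ) * E) :
    c ^ Fintype.card ι * ((Fintype.card κ - #{i | ¬ p i} : ℕ) * t ^ E) ≤ ∑ j, ∏ i, α i j := by
  obtain ⟨K, hKcard, hK⟩ := exists_card_eq_card_sub_forall_eq {i | ¬ p i} α c
    fun i hi => (hfixed i (mem_filter.1 hi).2).imp fun _ hk => hk.2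
  have hfixedK : ∀ i, ¬ p i → ∀ j ∈ K, α i j = c := fun i hi => hK i (by simpa using hi)
  have hα : ∀ i j, 0 ≤ α i j := fun i j => by
    by_cases hi : p i
    · exact (mul_nonneg hc.le ht0).trans (hfree i hi j).1
    · obtain ⟨k, hk0, hk⟩ := hfixed i hi
      by_cases hjk : j = k
      · exact (hjk ▸ hk0).ge
      · exact (hk j hjk).symm ▸ hc.le
  have hKmem : ∀ i, ∀ j ∈ K, c * t ≤ α i j ∧ α i j ≤ c := fun i j hj => by
    by_cases hi : p i
    · exact hfree i hi j
    · rw [hfixedK i hi j hj]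
      exact ⟨mul_le_of_le_one_right hc.le ht1.le, le_rfl⟩
  have hdeficit := sum_sum_le_card_filter_mul p K (fun i j => deficit c t (α i j))
    (fun i hi => ⟨fun j => (deficit_mem_Icc hc ht1 (hfree i hi j)).1, sum_deficit (hsum i)⟩)
    fun i hi j hj => by simp only [hfixedK i hi j hj, deficit_self]
  rw [← hKcard]
  exact pow_card_mul_card_mul_rpow_le_sum_prod hc ht0 ht1 hα hKmem (hdeficit.trans (hKcard ▸ hE))

lemma Fin.card_filter_not_val_lt_sub {n m : ℕ} (hm : m ≤ n) :
    #{i : Fin n | ¬ (i : ℕ) < n - m} = m := by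
  have h := card_filter_add_card_filter_not (s := univ) (fun i : Fin n => (i : ℕ) < n - m)
  simp only [Fin.card_filter_val_lt, card_univ, Fintype.card_fin] at h
  omega

theorem stmt_4 (q b s : ℕ) (hb : 1 ≤ b) (hqb : b < q) (hs : s ≤ b)
    (α : Fin b → Fin q → ℝ)
    (hsum : ∀ i, ∑ j, α i j = 1)
    (hS1 : ∀ i : Fin b, (i : ℕ) < b - s →
      ∀ j, (1 / ((q : ℝ) - 1)) * (1 - 1 / ((q : ℝ) - b)) ≤ α i j ∧
        α i j ≤ 1 / ((q : ℝ) - 1))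
    (hS2 : ∀ i : Fin b, b - s ≤ (i : ℕ) →
      ∃ k, α i k = 0 ∧ ∀ j, j ≠ k → α i j = 1 / ((q : ℝ) - 1)) :
    ∑ j, ∏ i, α i j ≥
      (((q : ℝ) - s) / ((q : ℝ) - 1) ^ b) *
        (1 - 1 / ((q : ℝ) - b)) ^
          (((b : ℝ) - s) - ((b : ℝ) - s) ^ 2 / ((q : ℝ) - s)) := by
  have hq : (0 : ℝ) < q - 1 := sub_pos.2 (by exact_mod_cast hb.trans_lt hqb)
  have hqb' : (1 : ℝ) ≤ q - b := by
    rw [le_sub_iff_add_le']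
    exact_mod_cast hqb
  have hqs : (0 : ℝ) < q - s := sub_pos.2 (by exact_mod_cast hs.trans_lt hqb)
  have hcard_free : #{i : Fin b | (i : ℕ) < b - s} = b - s := by
    rw [Fin.card_filter_val_lt, min_eq_right (Nat.sub_le b s)]
  have hcard_fixed := Fin.card_filter_not_val_lt_sub hs
  have key := pow_card_mul_card_mul_rpow_le_sum_prod_of_rows (fun i : Fin b => (i : ℕ) < b - s)
    (one_div_pos.2 hq) (sub_nonneg.2 ((div_le_one (by linarith)).2 hqb'))
    (sub_lt_self _ (by positivity)) hsum hS1 (fun i hi => hS2 i (not_lt.1 hi))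
    (E := ((b : ℝ) - s) - ((b : ℝ) - s) ^ 2 / ((q : ℝ) - s)) (le_of_eq <| by
      rw [hcard_free, hcard_fixed, Fintype.card_fin, Nat.cast_sub hs,
        Nat.cast_sub (hs.trans hqb.le)]
      field_simp
      ring)
  simp only [Fintype.card_fin, hcard_fixed, Nat.cast_sub (hs.trans hqb.le)] at key
  refine le_of_eq_of_le ?_ key
  rw [div_pow, one_pow]
  ring
end

section
/- Let $q > b \geq 1$ be integers and let $z_1,\ldots,z_q, \alpha_1,\ldots,\alpha_q$ be reals with $0 \leq z_j \leq 1/(q-1)^{b-1}$ and $\alpha_j \geq 0$ for all $j$, and set $A = \sum_{j=1}^q z_j \alpha_j$. For signs $s_1,\ldots,s_q \in \{-1,+1\}$ define $\tau_k = z_k \sum_{j=1}^q (s_j - s_k) z_j \alpha_j$. Then $\max_k \tau_k - \min_k \tau_k \leq \frac{2A}{(q-1)^{b-1}}$. -/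
theorem stmt_6 (q b : ℕ) (hb : 1 ≤ b) (hqb : b < q)
    (z α : Fin q → ℝ)
    (hz : ∀ j, 0 ≤ z j ∧ z j ≤ 1 / ((q : ℝ) - 1) ^ (b - 1))
    (hα : ∀ j, 0 ≤ α j)
    (s : Fin q → ℝ) (hs : ∀ j, s j = -1 ∨ s j = 1) :
    ∀ k l : Fin q,
      (z k * ∑ j, (s j - s k) * z j * α j) - (z l * ∑ j, (s j - s l) * z j * α j) ≤
        2 * (∑ j, z j * α j) / ((q : ℝ) - 1) ^ (b - 1) := by
  intro k l
  have hq2 : 2 ≤ q := lt_of_le_of_lt hb hqb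
  have hq1 : (1 : ℝ) ≤ (q : ℝ) - 1 := by
    have : (2 : ℝ) ≤ (q : ℝ) := by exact_mod_cast hq2
    linarith
  set M : ℝ := ((q : ℝ) - 1) ^ (b - 1) with hMdef
  have hM : 0 < M := pow_pos (by linarith) _
  set P : ℝ := ∑ j, ((s j + 1) / 2) * (z j * α j) with hPdef
  set N : ℝ := ∑ j, ((1 - s j) / 2) * (z j * α j) with hNdef
  have hzα : ∀ j, 0 ≤ z j * α j := fun j => mul_nonneg (hz j).1 (hα j)
  have hP : 0 ≤ P := Finset.sum_nonneg fun j _ => by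
    rcases hs j with h | h <;> rw [h] <;> [simp; exact mul_nonneg (by norm_num) (hzα j)]
  have hN : 0 ≤ N := Finset.sum_nonneg fun j _ => by
    rcases hs j with h | h <;> rw [h] <;> [exact mul_nonneg (by norm_num) (hzα j); simp]
  have hPN : P + N = ∑ j, z j * α j := by
    rw [hPdef, hNdef, ← Finset.sum_add_distrib]
    exact Finset.sum_congr rfl fun j _ => by ring
  have hub : ∀ m, z m * ∑ j, (s j - s m) * z j * α j ≤ 2 * P / M := by
    intro m
    rcases hs m with h | h
    · have hsum : ∑ j, (s j - s m) * z j * α j = 2 * P := by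
        rw [h, hPdef, Finset.mul_sum]
        exact Finset.sum_congr rfl fun j _ => by ring
      rw [hsum]
      calc z m * (2 * P) ≤ (1 / M) * (2 * P) :=
            mul_le_mul_of_nonneg_right (hz m).2 (by linarith)
        _ = 2 * P / M := by ring
    · have hsum : ∑ j, (s j - s m) * z j * α j = -(2 * N) := by
        rw [h, hNdef, Finset.mul_sum, ← Finset.sum_neg_distrib]
        exact Finset.sum_congr rfl fun j _ => by ring
      rw [hsum]
      have h1 : z m * -(2 * N) ≤ 0 := by
        have := mul_nonneg (hz m).1 (by linarith : (0:ℝ) ≤ 2 * N)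
        nlinarith
      have h2 : 0 ≤ 2 * P / M := div_nonneg (by linarith) hM.le
      linarith
  have hlb : ∀ m, -(2 * N / M) ≤ z m * ∑ j, (s j - s m) * z j * α j := by
    intro m
    rcases hs m with h | h
    · have hsum : ∑ j, (s j - s m) * z j * α j = 2 * P := by
        rw [h, hPdef, Finset.mul_sum]
        exact Finset.sum_congr rfl fun j _ => by ring
      rw [hsum]
      have h1 : 0 ≤ z m * (2 * P) := mul_nonneg (hz m).1 (by linarith)
      have h2 : 0 ≤ 2 * N / M := div_nonneg (by linarith) hM.le
      linarith
    · have hsum : ∑ j, (s j - s m) * z j * α j = -(2 * N) := by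
        rw [h, hNdef, Finset.mul_sum, ← Finset.sum_neg_distrib]
        exact Finset.sum_congr rfl fun j _ => by ring
      rw [hsum]
      have : z m * (2 * N) ≤ (1 / M) * (2 * N) :=
        mul_le_mul_of_nonneg_right (hz m).2 (by linarith)
      have : -(1 / M * (2 * N)) ≤ -(z m * (2 * N)) := by linarith
      calc -(2 * N / M) = -(1 / M * (2 * N)) := by ring
        _ ≤ -(z m * (2 * N)) := this
        _ = z m * -(2 * N) := by ring
  have h1 := hub k
  have h2 := hlb l
  have hA : 2 * (∑ j, z j * α j) / M = 2 * P / M + 2 * N / M := by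
    rw [← hPN]; ring
  rw [hA]
  linarith
end

section
/- Let $\gamma, \xi \in \mathbb{R}^4$ be probability vectors satisfying: every entry lies in $[1/6, 1/3]$; every entry is either equal to $1/3$ or at most $11/36$; and if exactly two entries equal $1/3$ then the vector is a permutation of $(1/6,1/6,1/3,1/3)$. Define $(f(\gamma,\xi))_i = \frac{\sum_{j \neq i} \gamma_j \xi_j}{3 \sum_{j=1}^4 \gamma_j \xi_j}$. Then $f(\gamma,\xi)$ also satisfies all three properties. -/
lemma aux8 (g0 g1 g2 g3 x0 x1 x2 x3 : ℝ)
    (hg0 : 1/6 ≤ g0) (hg0' : g0 ≤ 1/3) (hg1 : 1/6 ≤ g1) (hg1' : g1 ≤ 1/3)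
    (hg2 : 1/6 ≤ g2) (hg2' : g2 ≤ 1/3) (hg3 : 1/6 ≤ g3) (hg3' : g3 ≤ 1/3)
    (hx0 : 1/6 ≤ x0) (hx0' : x0 ≤ 1/3) (hx1 : 1/6 ≤ x1) (hx1' : x1 ≤ 1/3)
    (hx2 : 1/6 ≤ x2) (hx2' : x2 ≤ 1/3) (hx3 : 1/6 ≤ x3) (hx3' : x3 ≤ 1/3)
    (hsg : g0 + g1 + g2 + g3 = 1) (hsx : x0 + x1 + x2 + x3 = 1) :
    2 * (g0*x0) ≤ g0*x0 + g1*x1 + g2*x2 + g3*x3 ∧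
      g0*x0 + g1*x1 + g2*x2 + g3*x3 ≤ 12 * (g0*x0) := by
  constructor
  · nlinarith [mul_nonneg (sub_nonneg.2 hg1) (sub_nonneg.2 hx1),
      mul_nonneg (sub_nonneg.2 hg2) (sub_nonneg.2 hx2),
      mul_nonneg (sub_nonneg.2 hg3) (sub_nonneg.2 hx3)]
  · nlinarith [mul_nonneg (sub_nonneg.2 hg1) (sub_nonneg.2 hx1),
      mul_nonneg (sub_nonneg.2 hg2) (sub_nonneg.2 hx2),
      mul_nonneg (sub_nonneg.2 hg3) (sub_nonneg.2 hx3),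
      mul_nonneg (sub_nonneg.2 hg1') (sub_nonneg.2 hx1'),
      mul_nonneg (sub_nonneg.2 hg2') (sub_nonneg.2 hx2'),
      mul_nonneg (sub_nonneg.2 hg3') (sub_nonneg.2 hx3'),
      mul_nonneg (sub_nonneg.2 hg0) (sub_nonneg.2 hx0),
      mul_nonneg (sub_nonneg.2 hg0') (sub_nonneg.2 hx0')]

/-- The set `S₁'` of messages for `q = 4`, `b = 2`: a probability vector on `[4]`
whose entries lie in `[1/6, 1/3]`, each entry is `1/3` or at most `11/36`, and
if exactly two entries equal `1/3` then it is a permutation of `(1/6,1/6,1/3,1/3)`. -/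
def IsS1' (γ : Fin 4 → ℝ) : Prop :=
  (∑ i, γ i = 1) ∧
  (∀ i, 1 / 6 ≤ γ i ∧ γ i ≤ 1 / 3) ∧
  (∀ i, γ i = 1 / 3 ∨ γ i ≤ 11 / 36) ∧
  (∀ i j : Fin 4, i ≠ j → γ i = 1 / 3 → γ j = 1 / 3 →
    (∀ k, k ≠ i → k ≠ j → γ k ≠ 1 / 3) →
    ∀ k, k ≠ i → k ≠ j → γ k = 1 / 6)

theorem stmt_8 (γ ξ : Fin 4 → ℝ) (hγ : IsS1' γ) (hξ : IsS1' ξ) :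
    IsS1' (fun i =>
      (∑ j ∈ Finset.univ.filter (fun j => j ≠ i), γ j * ξ j) /
        (3 * ∑ j, γ j * ξ j)) := by
  obtain ⟨hγs, hγb, -, -⟩ := hγ
  obtain ⟨hξs, hξb, -, -⟩ := hξ
  rw [Fin.sum_univ_four] at hγs hξs
  have hSval : ∑ j, γ j * ξ j = γ 0 * ξ 0 + γ 1 * ξ 1 + γ 2 * ξ 2 + γ 3 * ξ 3 :=
    Fin.sum_univ_four _
  obtain ⟨a0, b0⟩ := hγb 0; obtain ⟨a1, b1⟩ := hγb 1
  obtain ⟨a2, b2⟩ := hγb 2; obtain ⟨a3, b3⟩ := hγb 3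
  obtain ⟨c0, d0⟩ := hξb 0; obtain ⟨c1, d1⟩ := hξb 1
  obtain ⟨c2, d2⟩ := hξb 2; obtain ⟨c3, d3⟩ := hξb 3
  have K0 := aux8 _ _ _ _ _ _ _ _ a0 b0 a1 b1 a2 b2 a3 b3 c0 d0 c1 d1 c2 d2 c3 d3 hγs hξs
  have K1 := aux8 _ _ _ _ _ _ _ _ a1 b1 a0 b0 a2 b2 a3 b3 c1 d1 c0 d0 c2 d2 c3 d3
    (by linarith) (by linarith)
  have K2 := aux8 _ _ _ _ _ _ _ _ a2 b2 a0 b0 a1 b1 a3 b3 c2 d2 c0 d0 c1 d1 c3 d3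
    (by linarith) (by linarith)
  have K3 := aux8 _ _ _ _ _ _ _ _ a3 b3 a0 b0 a1 b1 a2 b2 c3 d3 c0 d0 c1 d1 c2 d2
    (by linarith) (by linarith)
  have key : ∀ i : Fin 4, 2 * (γ i * ξ i) ≤ ∑ j, γ j * ξ j ∧
      ∑ j, γ j * ξ j ≤ 12 * (γ i * ξ i) := by
    intro i
    rw [hSval]
    fin_cases i
    · exact K0
    · show 2 * (γ 1 * ξ 1) ≤ _ ∧ _ ≤ 12 * (γ 1 * ξ 1)
      exact ⟨by linarith [K1.1], by linarith [K1.2]⟩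
    · show 2 * (γ 2 * ξ 2) ≤ _ ∧ _ ≤ 12 * (γ 2 * ξ 2)
      exact ⟨by linarith [K2.1], by linarith [K2.2]⟩
    · show 2 * (γ 3 * ξ 3) ≤ _ ∧ _ ≤ 12 * (γ 3 * ξ 3)
      exact ⟨by linarith [K3.1], by linarith [K3.2]⟩
  have hppos : ∀ i : Fin 4, (0:ℝ) < γ i * ξ i := by
    intro i
    exact mul_pos (lt_of_lt_of_le (by norm_num) (hγb i).1)
      (lt_of_lt_of_le (by norm_num) (hξb i).1)
  have hSpos : 0 < ∑ j, γ j * ξ j := by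
    linarith [hppos 0, (key 0).1]
  have hdpos : 0 < 3 * ∑ j, γ j * ξ j := by linarith
  have hfilter : ∀ i : Fin 4,
      ∑ j ∈ Finset.univ.filter (fun j => j ≠ i), γ j * ξ j =
        (∑ j, γ j * ξ j) - γ i * ξ i := by
    intro i
    rw [Finset.filter_ne', Finset.sum_erase_eq_sub (Finset.mem_univ i)]
  refine ⟨?_, ?_, ?_, ?_⟩
  · simp only [hfilter]
    rw [Fin.sum_univ_four]
    field_simp
    linarith [hSval]
  · intro i
    simp only [hfilter]
    constructor
    · rw [le_div_iff₀ hdpos]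
      linarith [(key i).1]
    · rw [div_le_iff₀ hdpos]
      linarith [(hppos i)]
  · intro i
    right
    simp only [hfilter]
    rw [div_le_iff₀ hdpos]
    linarith [(key i).2]
  · intro i j hij hi hj hk
    exfalso
    simp only [hfilter] at hi
    rw [div_eq_iff (ne_of_gt hdpos)] at hi
    linarith [hppos i]
end

section
/- Let $\gamma, \xi \in \mathbb{R}^4$ each be either (a) a probability vector with all entries in $[1/6,1/3]$, each entry equal to $1/3$ or at most $11/36$, and equal to a permutation of $(1/6,1/6,1/3,1/3)$ whenever exactly two entries equal $1/3$; or (b) a permutation of $(0,1/3,1/3,1/3)$. Then $\sum_{i=1}^4 \gamma_i \xi_i \geq 2/9$. Moreover, if $\sum_{i=1}^4 \gamma_i \xi_i \neq 2/9$ then $\sum_{i=1}^4 \gamma_i \xi_i \geq 49/216$. -/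
/-- The set `S₂`: permutations of `(0, 1/3, 1/3, 1/3)`. -/
def IsS2 (γ : Fin 4 → ℝ) : Prop :=
  ∃ i, γ i = 0 ∧ ∀ j, j ≠ i → γ j = 1 / 3

private lemma idx_ineq (a b : ℝ) (ha : a = 0 ∨ 1/36 ≤ a) (hb : b = 0 ∨ 1/36 ≤ b)
    (ha6 : a ≤ 1/6) (hb6 : b ≤ 1/6) : (a+b)/72 - 1/432 ≤ a*b := by
  rcases ha with h | h
  · subst h; rcases hb with h' | h' <;> simp <;> linarith
  · rcases hb with h' | h'
    · subst h'; simp; linarith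
    · nlinarith

private lemma idx2 (a b : ℝ) (ha : 1/36 ≤ a) (hb : 1/36 ≤ b) : (a+b)/72 ≤ a*b := by
  nlinarith

private lemma core (a0 a1 a2 a3 b0 b1 b2 b3 : ℝ)
    (ha0 : 1/36 ≤ a0) (hb0 : 1/36 ≤ b0)
    (da1 : a1 = 0 ∨ 1/36 ≤ a1) (da2 : a2 = 0 ∨ 1/36 ≤ a2) (da3 : a3 = 0 ∨ 1/36 ≤ a3)
    (db1 : b1 = 0 ∨ 1/36 ≤ b1) (db2 : b2 = 0 ∨ 1/36 ≤ b2) (db3 : b3 = 0 ∨ 1/36 ≤ b3)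
    (ua0 : a0 ≤ 1/6) (ua1 : a1 ≤ 1/6) (ua2 : a2 ≤ 1/6) (ua3 : a3 ≤ 1/6)
    (ub0 : b0 ≤ 1/6) (ub1 : b1 ≤ 1/6) (ub2 : b2 ≤ 1/6) (ub3 : b3 ≤ 1/6)
    (hsa : a0 + a1 + a2 + a3 = 1/3) (hsb : b0 + b1 + b2 + b3 = 1/3) :
    1/216 ≤ a0*b0 + a1*b1 + a2*b2 + a3*b3 := by
  have na1 : 0 ≤ a1 := by rcases da1 with h | h <;> linarith
  have na2 : 0 ≤ a2 := by rcases da2 with h | h <;> linarith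
  have na3 : 0 ≤ a3 := by rcases da3 with h | h <;> linarith
  have nb1 : 0 ≤ b1 := by rcases db1 with h | h <;> linarith
  have nb2 : 0 ≤ b2 := by rcases db2 with h | h <;> linarith
  have nb3 : 0 ≤ b3 := by rcases db3 with h | h <;> linarith
  by_cases c1 : 1/36 ≤ a1 ∧ 1/36 ≤ b1
  · have h0 := idx2 a0 b0 ha0 hb0
    have h1 := idx2 a1 b1 c1.1 c1.2
    have h2 := idx_ineq a2 b2 da2 db2 ua2 ub2
    have h3 := idx_ineq a3 b3 da3 db3 ua3 ub3
    linarith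
  by_cases c2 : 1/36 ≤ a2 ∧ 1/36 ≤ b2
  · have h0 := idx2 a0 b0 ha0 hb0
    have h2 := idx2 a2 b2 c2.1 c2.2
    have h1 := idx_ineq a1 b1 da1 db1 ua1 ub1
    have h3 := idx_ineq a3 b3 da3 db3 ua3 ub3
    linarith
  by_cases c3 : 1/36 ≤ a3 ∧ 1/36 ≤ b3
  · have h0 := idx2 a0 b0 ha0 hb0
    have h3 := idx2 a3 b3 c3.1 c3.2
    have h1 := idx_ineq a1 b1 da1 db1 ua1 ub1
    have h2 := idx_ineq a2 b2 da2 db2 ua2 ub2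
    linarith
  -- for j = 1,2,3 : aj = 0 ∨ bj = 0
  have d1 : a1 = 0 ∨ b1 = 0 := by
    rcases da1 with h | h
    · exact Or.inl h
    · rcases db1 with h' | h'
      · exact Or.inr h'
      · exact absurd ⟨h, h'⟩ c1
  have d2 : a2 = 0 ∨ b2 = 0 := by
    rcases da2 with h | h
    · exact Or.inl h
    · rcases db2 with h' | h'
      · exact Or.inr h'
      · exact absurd ⟨h, h'⟩ c2
  have d3 : a3 = 0 ∨ b3 = 0 := by
    rcases da3 with h | h
    · exact Or.inl h
    · rcases db3 with h' | h'
      · exact Or.inr h'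
      · exact absurd ⟨h, h'⟩ c3
  have p1 : 0 ≤ a1 * b1 := mul_nonneg na1 nb1
  have p2 : 0 ≤ a2 * b2 := mul_nonneg na2 nb2
  have p3 : 0 ≤ a3 * b3 := mul_nonneg na3 nb3
  by_cases e : a0 = 1/6
  · have : 1/216 ≤ a0 * b0 := by rw [e]; linarith
    linarith
  by_cases f : b0 = 1/6
  · have : 1/216 ≤ a0 * b0 := by rw [f]; nlinarith
    linarith
  · exfalso
    have e' : a0 < 1/6 := lt_of_le_of_ne ua0 e
    have f' : b0 < 1/6 := lt_of_le_of_ne ub0 f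
    rcases d1 with h1 | h1 <;> rcases d2 with h2 | h2 <;> rcases d3 with h3 | h3 <;> linarith

set_option maxHeartbeats 2000000 in
private lemma s1s1 (γ ξ : Fin 4 → ℝ) (hγ : IsS1' γ) (hξ : IsS1' ξ) :
    (∑ i, γ i * ξ i ≥ 2 / 9) ∧
    (∑ i, γ i * ξ i ≠ 2 / 9 → ∑ i, γ i * ξ i ≥ 49 / 216) := by
  obtain ⟨hs, hb, hd, -⟩ := hγ
  obtain ⟨hs', hb', hd', -⟩ := hξ
  have hsum : γ 0 + γ 1 + γ 2 + γ 3 = 1 := by simpa [Fin.sum_univ_four] using hs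
  have hsum' : ξ 0 + ξ 1 + ξ 2 + ξ 3 = 1 := by simpa [Fin.sum_univ_four] using hs'
  have key : ∑ i, γ i * ξ i = 2/9 + ((1/3 - γ 0) * (1/3 - ξ 0) + (1/3 - γ 1) * (1/3 - ξ 1)
      + (1/3 - γ 2) * (1/3 - ξ 2) + (1/3 - γ 3) * (1/3 - ξ 3)) := by
    simp only [Fin.sum_univ_four]
    ring_nf
    linear_combination ((1:ℝ)/3) * hsum + ((1:ℝ)/3) * hsum'
  have nA : ∀ i, 0 ≤ 1/3 - γ i := fun i => by linarith [(hb i).2]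
  have nB : ∀ i, 0 ≤ 1/3 - ξ i := fun i => by linarith [(hb' i).2]
  have uA : ∀ i, 1/3 - γ i ≤ 1/6 := fun i => by linarith [(hb i).1]
  have uB : ∀ i, 1/3 - ξ i ≤ 1/6 := fun i => by linarith [(hb' i).1]
  have dA : ∀ i, 1/3 - γ i = 0 ∨ 1/36 ≤ 1/3 - γ i := fun i => by
    rcases hd i with h | h
    · left; rw [h]; ring
    · right; linarith
  have dB : ∀ i, 1/3 - ξ i = 0 ∨ 1/36 ≤ 1/3 - ξ i := fun i => by
    rcases hd' i with h | h
    · left; rw [h]; ring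
    · right; linarith
  have sA : (1/3 - γ 0) + (1/3 - γ 1) + (1/3 - γ 2) + (1/3 - γ 3) = 1/3 := by linarith
  have sB : (1/3 - ξ 0) + (1/3 - ξ 1) + (1/3 - ξ 2) + (1/3 - ξ 3) = 1/3 := by linarith
  have pnn : ∀ i : Fin 4, 0 ≤ (1/3 - γ i) * (1/3 - ξ i) := fun i => mul_nonneg (nA i) (nB i)
  have sA1 : (1/3 - γ 1) + (1/3 - γ 0) + (1/3 - γ 2) + (1/3 - γ 3) = 1/3 := by linarith
  have sA2 : (1/3 - γ 2) + (1/3 - γ 0) + (1/3 - γ 1) + (1/3 - γ 3) = 1/3 := by linarith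
  have sA3 : (1/3 - γ 3) + (1/3 - γ 0) + (1/3 - γ 1) + (1/3 - γ 2) = 1/3 := by linarith
  have sB1 : (1/3 - ξ 1) + (1/3 - ξ 0) + (1/3 - ξ 2) + (1/3 - ξ 3) = 1/3 := by linarith
  have sB2 : (1/3 - ξ 2) + (1/3 - ξ 0) + (1/3 - ξ 1) + (1/3 - ξ 3) = 1/3 := by linarith
  have sB3 : (1/3 - ξ 3) + (1/3 - ξ 0) + (1/3 - ξ 1) + (1/3 - ξ 2) = 1/3 := by linarith
  constructor
  · have := pnn 0; have := pnn 1; have := pnn 2; have := pnn 3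
    rw [key]; linarith
  · intro hne
    have hT : (1/3 - γ 0) * (1/3 - ξ 0) + (1/3 - γ 1) * (1/3 - ξ 1)
        + (1/3 - γ 2) * (1/3 - ξ 2) + (1/3 - γ 3) * (1/3 - ξ 3) ≠ 0 := by
      intro h; exact hne (by rw [key, h]; ring)
    have hpos : 0 < (1/3 - γ 0) * (1/3 - ξ 0) ∨ 0 < (1/3 - γ 1) * (1/3 - ξ 1)
        ∨ 0 < (1/3 - γ 2) * (1/3 - ξ 2) ∨ 0 < (1/3 - γ 3) * (1/3 - ξ 3) := by
      by_contra h
      push_neg at h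
      obtain ⟨h0, h1, h2, h3⟩ := h
      exact hT (by linarith [pnn 0, pnn 1, pnn 2, pnn 3])
    have getA : ∀ i : Fin 4, 0 < (1/3 - γ i) * (1/3 - ξ i) → 1/36 ≤ 1/3 - γ i := by
      intro i hi
      rcases dA i with h | h
      · rw [h, zero_mul] at hi; exact absurd hi (lt_irrefl 0)
      · exact h
    have getB : ∀ i : Fin 4, 0 < (1/3 - γ i) * (1/3 - ξ i) → 1/36 ≤ 1/3 - ξ i := by
      intro i hi
      rcases dB i with h | h
      · rw [h, mul_zero] at hi; exact absurd hi (lt_irrefl 0)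
      · exact h
    rw [key]
    rcases hpos with h | h | h | h
    · have := core (1/3 - γ 0) (1/3 - γ 1) (1/3 - γ 2) (1/3 - γ 3)
        (1/3 - ξ 0) (1/3 - ξ 1) (1/3 - ξ 2) (1/3 - ξ 3)
        (getA 0 h) (getB 0 h) (dA 1) (dA 2) (dA 3) (dB 1) (dB 2) (dB 3)
        (uA 0) (uA 1) (uA 2) (uA 3) (uB 0) (uB 1) (uB 2) (uB 3) sA sB
      linarith
    · have := core (1/3 - γ 1) (1/3 - γ 0) (1/3 - γ 2) (1/3 - γ 3)
        (1/3 - ξ 1) (1/3 - ξ 0) (1/3 - ξ 2) (1/3 - ξ 3)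
        (getA 1 h) (getB 1 h) (dA 0) (dA 2) (dA 3) (dB 0) (dB 2) (dB 3)
        (uA 1) (uA 0) (uA 2) (uA 3) (uB 1) (uB 0) (uB 2) (uB 3) sA1 sB1
      linarith
    · have := core (1/3 - γ 2) (1/3 - γ 0) (1/3 - γ 1) (1/3 - γ 3)
        (1/3 - ξ 2) (1/3 - ξ 0) (1/3 - ξ 1) (1/3 - ξ 3)
        (getA 2 h) (getB 2 h) (dA 0) (dA 1) (dA 3) (dB 0) (dB 1) (dB 3)
        (uA 2) (uA 0) (uA 1) (uA 3) (uB 2) (uB 0) (uB 1) (uB 3) sA2 sB2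
      linarith
    · have := core (1/3 - γ 3) (1/3 - γ 0) (1/3 - γ 1) (1/3 - γ 2)
        (1/3 - ξ 3) (1/3 - ξ 0) (1/3 - ξ 1) (1/3 - ξ 2)
        (getA 3 h) (getB 3 h) (dA 0) (dA 1) (dA 2) (dB 0) (dB 1) (dB 2)
        (uA 3) (uA 0) (uA 1) (uA 2) (uB 3) (uB 0) (uB 1) (uB 2) sA3 sB3
      linarith

private lemma s2s1 (γ ξ : Fin 4 → ℝ) (hγ : IsS2 γ) (hξ : IsS1' ξ) :
    (∑ i, γ i * ξ i ≥ 2 / 9) ∧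
    (∑ i, γ i * ξ i ≠ 2 / 9 → ∑ i, γ i * ξ i ≥ 49 / 216) := by
  obtain ⟨i, hi0, hrest⟩ := hγ
  obtain ⟨hs', hb', hd', -⟩ := hξ
  have hsum' : ξ 0 + ξ 1 + ξ 2 + ξ 3 = 1 := by simpa [Fin.sum_univ_four] using hs'
  have hγ' : ∀ k, γ k = if k = i then 0 else 1/3 := fun k => by
    by_cases h : k = i
    · simp [h, hi0]
    · simp [h, hrest k h]
  have key : ∑ k, γ k * ξ k = 1/3 - ξ i / 3 := by
    have h1 : ∀ k ∈ Finset.univ, γ k * ξ k = (1/3) * ξ k - (if k = i then (1/3) * ξ k else 0) := by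
      intro k _
      rw [hγ' k]
      by_cases h : k = i <;> simp [h]
    rw [Finset.sum_congr rfl h1, Finset.sum_sub_distrib,
      Finset.sum_ite_eq' Finset.univ i fun k => (1/3) * ξ k, ← Finset.mul_sum, hs']
    simp only [Finset.mem_univ, if_true]
    ring
  rw [key]
  have h1 := (hb' i).2
  constructor
  · linarith
  · intro hne
    rcases hd' i with h | h
    · exact absurd (by rw [h]; norm_num) hne
    · linarith

private lemma s2s2 (γ ξ : Fin 4 → ℝ) (hγ : IsS2 γ) (hξ : IsS2 ξ) :
    (∑ i, γ i * ξ i ≥ 2 / 9) ∧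
    (∑ i, γ i * ξ i ≠ 2 / 9 → ∑ i, γ i * ξ i ≥ 49 / 216) := by
  obtain ⟨i, hi0, hiR⟩ := hγ
  obtain ⟨j, hj0, hjR⟩ := hξ
  have hγ' : ∀ k, γ k = if k = i then 0 else 1/3 := fun k => by
    by_cases h : k = i
    · simp [h, hi0]
    · simp [h, hiR k h]
  have hξ' : ∀ k, ξ k = if k = j then 0 else 1/3 := fun k => by
    by_cases h : k = j
    · simp [h, hj0]
    · simp [h, hjR k h]
  have key : ∑ k, γ k * ξ k = if i = j then 1/3 else 2/9 := by
    fin_cases i <;> fin_cases j <;>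
      simp [Fin.sum_univ_four, hγ', hξ'] <;> norm_num
  rw [key]
  by_cases h : i = j <;> simp [h] <;> norm_num

theorem stmt_9 (γ ξ : Fin 4 → ℝ)
    (hγ : IsS1' γ ∨ IsS2 γ) (hξ : IsS1' ξ ∨ IsS2 ξ) :
    (∑ i, γ i * ξ i ≥ 2 / 9) ∧
    (∑ i, γ i * ξ i ≠ 2 / 9 → ∑ i, γ i * ξ i ≥ 49 / 216) := by
  have comm : ∑ i, γ i * ξ i = ∑ i, ξ i * γ i :=
    Finset.sum_congr rfl fun i _ => mul_comm _ _
  rcases hγ with hγ | hγ <;> rcases hξ with hξ | hξ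
  · exact s1s1 γ ξ hγ hξ
  · rw [comm]; exact s2s1 ξ γ hξ hγ
  · exact s2s1 γ ξ hγ hξ
  · exact s2s2 γ ξ hγ hξ
end

section
/- Let $\gamma, \xi \in \mathbb{R}^4$ be probability vectors, each with at most one entry equal to $1/3$, all entries in $[1/6,1/3]$, and every entry either equal to $1/3$ or at most $11/36$. Then $\sum_{i=1}^4 \gamma_i \xi_i \geq 149/648$. -/
set_option maxHeartbeats 1000000 in
lemma tri10 (x y z : ℝ) (hs : x + y + z = 2/3)
    (hx : 1/6 ≤ x) (hx' : x ≤ 11/36) (hy : 1/6 ≤ y) (hy' : y ≤ 11/36)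
    (hz : 1/6 ≤ z) (hz' : z ≤ 11/36) :
    (x-1/4)^2 + (y-1/4)^2 + (z-1/4)^2 ≤ 17/1296 := by
  nlinarith [mul_nonneg (sub_nonneg.2 hx) (sub_nonneg.2 hy'),
    mul_nonneg (sub_nonneg.2 hy) (sub_nonneg.2 hx'),
    mul_nonneg (sub_nonneg.2 hx) (sub_nonneg.2 hz'),
    mul_nonneg (sub_nonneg.2 hz) (sub_nonneg.2 hx'),
    mul_nonneg (sub_nonneg.2 hy) (sub_nonneg.2 hz'),
    mul_nonneg (sub_nonneg.2 hz) (sub_nonneg.2 hy'),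
    mul_nonneg (sub_nonneg.2 hx) (sub_nonneg.2 hy),
    mul_nonneg (sub_nonneg.2 hx) (sub_nonneg.2 hz),
    mul_nonneg (sub_nonneg.2 hy) (sub_nonneg.2 hz),
    mul_nonneg (sub_nonneg.2 hx') (sub_nonneg.2 hy'),
    mul_nonneg (sub_nonneg.2 hx') (sub_nonneg.2 hz'),
    mul_nonneg (sub_nonneg.2 hy') (sub_nonneg.2 hz')]

set_option maxHeartbeats 1000000 in
lemma quad10 (w x y z : ℝ) (hs : w + x + y + z = 1)
    (hw : 1/6 ≤ w) (hw' : w ≤ 11/36)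
    (hx : 1/6 ≤ x) (hx' : x ≤ 11/36) (hy : 1/6 ≤ y) (hy' : y ≤ 11/36)
    (hz : 1/6 ≤ z) (hz' : z ≤ 11/36) :
    (w-1/4)^2 + (x-1/4)^2 + (y-1/4)^2 + (z-1/4)^2 ≤ 13/648 := by
  nlinarith [mul_nonneg (sub_nonneg.2 hw) (sub_nonneg.2 hw'),
    mul_nonneg (sub_nonneg.2 hx) (sub_nonneg.2 hx'),
    mul_nonneg (sub_nonneg.2 hy) (sub_nonneg.2 hy'),
    mul_nonneg (sub_nonneg.2 hz) (sub_nonneg.2 hz')]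

set_option maxHeartbeats 1000000 in
open scoped Classical in
lemma aux10 (γ : Fin 4 → ℝ)
    (hsum : ∑ i, γ i = 1)
    (hb : ∀ i, 1 / 6 ≤ γ i ∧ γ i ≤ 1 / 3)
    (h' : ∀ i, γ i = 1 / 3 ∨ γ i ≤ 11 / 36)
    (h1 : (Finset.univ.filter (fun i => γ i = (1 / 3 : ℝ))).card ≤ 1) :
    ∑ i, (γ i - 1/4)^2 ≤ 13/648 := by
  have hpair : ∀ i j : Fin 4, i ≠ j → γ i = 1/3 → γ j = 1/3 → False := by
    intro i j hij hi hj
    have hsub : ({i, j} : Finset (Fin 4)) ⊆ Finset.univ.filter (fun i => γ i = (1/3 : ℝ)) := by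
      intro k hk
      simp only [Finset.mem_insert, Finset.mem_singleton] at hk
      rcases hk with rfl | rfl <;> simp [hi, hj]
    have hc := Finset.card_le_card hsub
    rw [Finset.card_insert_of_notMem (by simp [hij]), Finset.card_singleton] at hc
    omega
  rw [Fin.sum_univ_four] at hsum ⊢
  obtain ⟨l0, u0⟩ := hb 0
  obtain ⟨l1, u1⟩ := hb 1
  obtain ⟨l2, u2⟩ := hb 2
  obtain ⟨l3, u3⟩ := hb 3
  rcases h' 0 with e0 | e0
  · rcases h' 1 with e1 | e1
    · exact (hpair 0 1 (by decide) e0 e1).elim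
    rcases h' 2 with e2 | e2
    · exact (hpair 0 2 (by decide) e0 e2).elim
    rcases h' 3 with e3 | e3
    · exact (hpair 0 3 (by decide) e0 e3).elim
    have h := tri10 (γ 1) (γ 2) (γ 3) (by linarith) l1 e1 l2 e2 l3 e3
    rw [e0]; nlinarith [h]
  rcases h' 1 with e1 | e1
  · rcases h' 2 with e2 | e2
    · exact (hpair 1 2 (by decide) e1 e2).elim
    rcases h' 3 with e3 | e3
    · exact (hpair 1 3 (by decide) e1 e3).elim
    have h := tri10 (γ 0) (γ 2) (γ 3) (by linarith) l0 e0 l2 e2 l3 e3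
    rw [e1]; nlinarith [h]
  rcases h' 2 with e2 | e2
  · rcases h' 3 with e3 | e3
    · exact (hpair 2 3 (by decide) e2 e3).elim
    have h := tri10 (γ 0) (γ 1) (γ 3) (by linarith) l0 e0 l1 e1 l3 e3
    rw [e2]; nlinarith [h]
  rcases h' 3 with e3 | e3
  · have h := tri10 (γ 0) (γ 1) (γ 2) (by linarith) l0 e0 l1 e1 l2 e2
    rw [e3]; nlinarith [h]
  exact quad10 (γ 0) (γ 1) (γ 2) (γ 3) hsum l0 e0 l1 e1 l2 e2 l3 e3

set_option maxHeartbeats 1000000 in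
open scoped Classical in
theorem stmt_10 (γ ξ : Fin 4 → ℝ)
    (hγsum : ∑ i, γ i = 1) (hξsum : ∑ i, ξ i = 1)
    (hγb : ∀ i, 1 / 6 ≤ γ i ∧ γ i ≤ 1 / 3)
    (hξb : ∀ i, 1 / 6 ≤ ξ i ∧ ξ i ≤ 1 / 3)
    (hγ' : ∀ i, γ i = 1 / 3 ∨ γ i ≤ 11 / 36)
    (hξ' : ∀ i, ξ i = 1 / 3 ∨ ξ i ≤ 11 / 36)
    (hγ1 : (Finset.univ.filter (fun i => γ i = (1 / 3 : ℝ))).card ≤ 1)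
    (hξ1 : (Finset.univ.filter (fun i => ξ i = (1 / 3 : ℝ))).card ≤ 1) :
    ∑ i, γ i * ξ i ≥ 149 / 648 := by
  have hA := aux10 γ hγsum hγb hγ' hγ1
  have hB := aux10 ξ hξsum hξb hξ' hξ1
  rw [Fin.sum_univ_four] at hA hB hγsum hξsum ⊢
  nlinarith [sq_nonneg (γ 0 + ξ 0 - 1/2), sq_nonneg (γ 1 + ξ 1 - 1/2),
    sq_nonneg (γ 2 + ξ 2 - 1/2), sq_nonneg (γ 3 + ξ 3 - 1/2)]
end

section
/- Let $b \geq 2$ be an integer and let $c \approx 1.764$ be the unique positive real root of $c = e^{1/c}$. Define $g(b) = \frac{b}{cb+1}\left(1 - \frac{1}{(c-1)b+1}\right)^{-b + b^2/(cb+1)}$. Then $g(b) < 1$. -/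
/-!
With `q = c b + 1` and `d = q - b = (c - 1) b + 1` the exponent is `-b d / q`, so the claim is
`b d / q · log (d / (d - 1)) < log (q / b)`. Since `log (d / (d - 1)) ≤ 1 / (d - 1)` and
`log (q / b) = log c + log (q / (c b)) ≥ 1 / c + 1 / q`, it suffices that
`d / ((c - 1) q) < 1 / c + 1 / q`, which after clearing denominators is `c + 1 < c²`.
That holds because `c = exp (1 / c) ≥ 1 + 1 / c + 1 / (2 c²)`.
-/

open Real

lemma add_one_lt_sq_of_eq_exp_inv {c : ℝ} (hc : c = exp (1 / c)) : c + 1 < c ^ 2 := by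
  have hc0 : 0 < c := hc ▸ exp_pos _
  have hexp : 1 + 1 / c + (1 / c) ^ 2 / 2 ≤ c := by
    conv_rhs => rw [hc]
    exact quadratic_le_exp_of_nonneg (one_div_pos.mpr hc0).le
  have hcubic : 2 * c ^ 2 + 2 * c + 1 ≤ 2 * c ^ 3 := by
    have := mul_le_mul_of_nonneg_left hexp (by positivity : (0 : ℝ) ≤ 2 * c ^ 2)
    field_simp at this
    linarith
  nlinarith

lemma neg_inv_sub_one_le_log_one_sub_inv {d : ℝ} (hd : 1 < d) :
    -(d - 1)⁻¹ ≤ log (1 - d⁻¹) := by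
  have hpos : 0 < 1 - d⁻¹ := sub_pos.mpr (inv_lt_one_of_one_lt₀ hd)
  have hsub : 1 - (1 - d⁻¹)⁻¹ = -(d - 1)⁻¹ := by
    have : d - 1 ≠ 0 := by linarith
    field_simp
    ring
  exact hsub ▸ one_sub_inv_le_log_of_pos hpos

lemma log_add_inv_le_log_div {c b : ℝ} (hc : 0 < c) (hb : 0 < b) :
    log c + (c * b + 1)⁻¹ ≤ log ((c * b + 1) / b) := by
  have hsplit : (c * b + 1) / b = c * ((c * b + 1) / (c * b)) := by field_simp
  have hratio : 1 - ((c * b + 1) / (c * b))⁻¹ = (c * b + 1)⁻¹ := by field_simp; ring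
  rw [hsplit, log_mul hc.ne' (by positivity)]
  linarith [hratio ▸ one_sub_inv_le_log_of_pos (by positivity : 0 < (c * b + 1) / (c * b))]

theorem div_mul_rpow_lt_one {c b : ℝ} (hc0 : 0 < c) (hsq : c + 1 < c ^ 2)
    (hlog : 1 / c ≤ log c) (hb : 0 < b) :
    b / (c * b + 1) * (1 - 1 / ((c - 1) * b + 1)) ^ (-b + b ^ 2 / (c * b + 1)) < 1 := by
  have hc1 : 0 < c - 1 := by nlinarith
  set q := c * b + 1
  set d := (c - 1) * b + 1
  have hq0 : 0 < q := by positivity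
  have hd1 : 1 < d := by nlinarith
  have hexponent : -b + b ^ 2 / q = -(b * d / q) := by field_simp; ring
  have hbase : 0 < 1 - 1 / d := by rw [one_div]; exact sub_pos.mpr (inv_lt_one_of_one_lt₀ hd1)
  have hlog_base : -(b * d / q) * log (1 - 1 / d) ≤ d / ((c - 1) * q) := by
    have h := mul_le_mul_of_nonneg_left (neg_inv_sub_one_le_log_one_sub_inv hd1)
      (by positivity : 0 ≤ b * d / q)
    have : b * d / q * -(d - 1)⁻¹ = -(d / ((c - 1) * q)) := by
      rw [show d - 1 = (c - 1) * b by ring]; field_simp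
    rw [one_div]; linarith
  have hgap : d / ((c - 1) * q) < 1 / c + q⁻¹ := by
    rw [div_lt_iff₀ (by positivity)]
    have : (1 / c + q⁻¹) * ((c - 1) * q) - d = (c ^ 2 - c - 1) / c := by field_simp; ring
    have : 0 < (c ^ 2 - c - 1) / c := div_pos (by linarith) hc0
    linarith
  have hpow : (1 - 1 / d) ^ (-b + b ^ 2 / q) < q / b := by
    rw [rpow_def_of_pos hbase, ← exp_log (by positivity : 0 < q / b), exp_lt_exp, hexponent,
      mul_comm]
    linarith [log_add_inv_le_log_div hc0 hb]
  calc b / q * (1 - 1 / d) ^ (-b + b ^ 2 / q) < b / q * (q / b) := by gcongr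
    _ = 1 := by field_simp

theorem stmt_11_general (c : ℝ) (hc : c = Real.exp (1 / c))
    (b : ℕ) :
    ((b : ℝ) / (c * b + 1)) *
      (1 - 1 / ((c - 1) * b + 1)) ^ (-(b : ℝ) + (b : ℝ) ^ 2 / (c * b + 1)) < 1 := by
  rcases Nat.eq_zero_or_pos b with rfl | hb
  · simp
  have hc0 : 0 < c := hc ▸ exp_pos _
  have hlog : 1 / c ≤ log c := ((congrArg log hc).trans (log_exp _)).ge
  exact div_mul_rpow_lt_one hc0 (add_one_lt_sq_of_eq_exp_inv hc) hlog (by exact_mod_cast hb)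

theorem stmt_11 (c : ℝ) (hc0 : 0 < c) (hc : c = Real.exp (1 / c))
    (b : ℕ) (hb : 2 ≤ b) :
    ((b : ℝ) / (c * b + 1)) *
      (1 - 1 / ((c - 1) * b + 1)) ^ (-(b : ℝ) + (b : ℝ) ^ 2 / (c * b + 1)) < 1 :=
  stmt_11_general c hc b
end

section
/- Let $q > b \geq 1$ be integers and define $f:(\mathbb{R}^q)^b \to \mathbb{R}^q$ by $(f(\beta^1,\ldots,\beta^b))_i = \frac{\sum_{j \neq i}\prod_\ell \beta^\ell_j}{(q-1)\sum_j \prod_\ell \beta^\ell_j}$. Let $\gamma^1,\ldots,\gamma^{b-1}$ be probability vectors on $[q]$ with entries in $[0, 1/(q-1)]$, and let $\alpha,\beta$ be probability vectors with entries in $[\frac{1}{q-1}(1-\frac{1}{q-b}), \frac{1}{q-1}]$. Set $z_j = \prod_{i=1}^{b-1}\gamma^i_j$ and $A = \sum_{j=1}^q z_j \alpha_j$, and assume $A > 0$. Then $\|f(\gamma^1,\ldots,\gamma^{b-1},\alpha) - f(\gamma^1,\ldots,\gamma^{b-1},\beta)\|_1 \leq \frac{1}{(q-1)^b A}\|\alpha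 - \beta\|_1$. -/
/-!
Write `A = ∑ z α` and `B = ∑ z β`. The `i`-th coordinate of the difference of the two updates is
`z_i (A β_i - B α_i) / ((q-1) A B)`. The vector `x = Aβ - Bα` is orthogonal to `z`, hence
`∑ z_i |x_i| = 2 ∑ (z_i x_i)⁺`; if `A ≤ B` then `x ≤ A(β - α)`, so this is at most
`2 max z · A · ∑ (β - α)⁺ = max z · A · ‖α - β‖₁`, and symmetrically with `B` if `B ≤ A`.
Finally `max z ≤ (q-1)^(1-b)`. The denominator `B` is positive: a probability vector with
entries at most `1/(q-1)` vanishes at most once, so `z` has at most `b - 1` zeros, `β` at most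
one, and `b < q`.
-/

open Finset

section ZeroCount

variable {ι : Type*} [Fintype ι]

lemma one_le_card_support_mul {p : ι → ℝ} {c : ℝ} (hsum : ∑ j, p j = 1)
    (hle : ∀ j, p j ≤ c) : 1 ≤ #{j | p j ≠ 0} * c :=
  calc (1 : ℝ) = ∑ j with p j ≠ 0, p j := by rw [sum_filter_ne_zero, hsum]
    _ ≤ #{j | p j ≠ 0} • c := sum_le_card_nsmul _ _ _ fun j _ => hle j
    _ = #{j | p j ≠ 0} * c := nsmul_eq_mul _ _

lemma card_filter_eq_zero_le_one {q : ℕ} (hq : 1 < q) {p : Fin q → ℝ} (hsum : ∑ j, p j = 1)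
    (hle : ∀ j, p j ≤ 1 / ((q : ℝ) - 1)) : #{j | p j = 0} ≤ 1 := by
  have hK : (0 : ℝ) < q - 1 := by rw [sub_pos]; exact_mod_cast hq
  have hsupp : (q : ℝ) - 1 ≤ #{j | p j ≠ 0} := by
    have := one_le_card_support_mul hsum hle
    rwa [mul_one_div, le_div_iff₀ hK, one_mul] at this
  have hsplit := card_filter_add_card_filter_not (s := univ) (fun j => p j = 0)
  rw [card_univ, Fintype.card_fin] at hsplit
  have : q - 1 ≤ #{j | p j ≠ 0} := by
    rw [← Nat.cast_le (α := ℝ), Nat.cast_sub hq.le, Nat.cast_one]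
    exact hsupp
  simp only [ne_eq] at this
  omega

lemma card_filter_prod_eq_zero_le {κ M₀ : Type*} [Fintype κ] [CommMonoidWithZero M₀]
    [NoZeroDivisors M₀] [Nontrivial M₀] [DecidableEq M₀] (γ : κ → ι → M₀) :
    #{j | ∏ i, γ i j = 0} ≤ ∑ i, #{j | γ i j = 0} := by
  classical
  calc #{j | ∏ i, γ i j = 0} ≤ #(univ.biUnion fun i => ({j | γ i j = 0} : Finset ι)) := by
        refine card_le_card fun j hj => ?_
        obtain ⟨i, -, hi⟩ := prod_eq_zero_iff.mp (mem_filter.mp hj).2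
        exact mem_biUnion.mpr ⟨i, mem_univ i, mem_filter.mpr ⟨mem_univ j, hi⟩⟩
    _ ≤ ∑ i, #{j | γ i j = 0} := card_biUnion_le

lemma sum_mul_pos_of_card_zeros_lt {z w : ι → ℝ} (hz : ∀ j, 0 ≤ z j) (hw : ∀ j, 0 ≤ w j)
    (hcard : #{j | z j = 0} + #{j | w j = 0} < Fintype.card ι) : 0 < ∑ j, z j * w j := by
  classical
  obtain ⟨j, hzj, hwj⟩ : ∃ j, z j ≠ 0 ∧ w j ≠ 0 := by
    by_contra! h
    have hcover : univ ⊆ ({j | z j = 0} : Finset ι) ∪ ({j | w j = 0} : Finset ι) := fun j _ => by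
      by_cases hzj : z j = 0
      · simp [hzj]
      · simp [h j hzj]
    have := (card_le_card hcover).trans (card_union_le _ _)
    rw [card_univ] at this
    omega
  exact sum_pos' (fun j _ => mul_nonneg (hz j) (hw j))
    ⟨j, mem_univ j, mul_pos ((hz j).lt_of_ne' hzj) ((hw j).lt_of_ne' hwj)⟩

lemma sum_prod_mul_pos {m q : ℕ} (hmq : m + 1 < q) (γ : Fin m → Fin q → ℝ)
    (hγsum : ∀ i, ∑ j, γ i j = 1) (hγ : ∀ i j, 0 ≤ γ i j ∧ γ i j ≤ 1 / ((q : ℝ) - 1))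
    {β : Fin q → ℝ} (hβsum : ∑ j, β j = 1) (hβ : ∀ j, 0 ≤ β j ∧ β j ≤ 1 / ((q : ℝ) - 1)) :
    0 < ∑ j, (∏ i, γ i j) * β j := by
  have hq : 1 < q := by omega
  refine sum_mul_pos_of_card_zeros_lt (fun j => prod_nonneg fun i _ => (hγ i j).1)
    (fun j => (hβ j).1) ?_
  have hprod : #{j | ∏ i, γ i j = 0} ≤ m :=
    calc #{j | ∏ i, γ i j = 0} ≤ ∑ i, #{j | γ i j = 0} := card_filter_prod_eq_zero_le γ
      _ ≤ ∑ _i : Fin m, 1 := sum_le_sum fun i _ =>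
        card_filter_eq_zero_le_one hq (hγsum i) fun j => (hγ i j).2
      _ = m := by simp
  have := card_filter_eq_zero_le_one hq hβsum fun j => (hβ j).2
  rw [Fintype.card_fin]
  omega

end ZeroCount

section L1Bound

variable {ι : Type*} {s : Finset ι}

lemma sum_abs_eq_two_mul_sum_posPart {y : ι → ℝ} (hy : ∑ i ∈ s, y i = 0) :
    ∑ i ∈ s, |y i| = 2 * ∑ i ∈ s, (y i)⁺ := by
  have habs : ∀ a : ℝ, |a| = 2 * a⁺ - a := fun a => by
    rw [← posPart_add_negPart]; linarith [posPart_sub_negPart a]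
  rw [sum_congr rfl fun i _ => habs (y i), sum_sub_distrib, hy, mul_sum, sub_zero]

variable {z α β : ι → ℝ} {M : ℝ}

lemma sum_abs_mul_mul_sub_mul_le_of_le (hz : ∀ i ∈ s, 0 ≤ z i) (hzM : ∀ i ∈ s, z i ≤ M)
    (hα : ∀ i ∈ s, 0 ≤ α i) (hsum : ∑ i ∈ s, α i = ∑ i ∈ s, β i)
    (hAB : ∑ j ∈ s, z j * α j ≤ ∑ j ∈ s, z j * β j) :
    ∑ i ∈ s, |z i * ((∑ j ∈ s, z j * α j) * β i - (∑ j ∈ s, z j * β j) * α i)| ≤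
      M * (∑ j ∈ s, z j * α j) * ∑ i ∈ s, |α i - β i| := by
  set A := ∑ j ∈ s, z j * α j
  set B := ∑ j ∈ s, z j * β j
  have hA : 0 ≤ A := sum_nonneg fun j hj => mul_nonneg (hz j hj) (hα j hj)
  have horth : ∑ i ∈ s, z i * (A * β i - B * α i) = 0 := by
    simp only [mul_sub, sum_sub_distrib]
    simp only [mul_left_comm _ A, mul_left_comm _ B, ← mul_sum]
    ring
  have hdiff : ∑ i ∈ s, (β i - α i) = 0 := by rw [sum_sub_distrib, hsum, sub_self]
  have hpos : ∀ i ∈ s, (z i * (A * β i - B * α i))⁺ ≤ M * A * (β i - α i)⁺ := fun i hi => by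
    refine sup_le ?_ (mul_nonneg (mul_nonneg ((hz i hi).trans (hzM i hi)) hA) (posPart_nonneg _))
    calc z i * (A * β i - B * α i) ≤ z i * (A * (β i - α i)⁺) := by
          gcongr
          · exact hz i hi
          · nlinarith [le_posPart (β i - α i), hα i hi]
      _ ≤ M * (A * (β i - α i)⁺) := by gcongr; exact hzM i hi
      _ = M * A * (β i - α i)⁺ := by ring
  calc ∑ i ∈ s, |z i * (A * β i - B * α i)| = 2 * ∑ i ∈ s, (z i * (A * β i - B * α i))⁺ :=
        sum_abs_eq_two_mul_sum_posPart horth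
    _ ≤ 2 * ∑ i ∈ s, M * A * (β i - α i)⁺ := by gcongr with i hi; exact hpos i hi
    _ = M * A * ∑ i ∈ s, |β i - α i| := by
        rw [sum_abs_eq_two_mul_sum_posPart hdiff, ← mul_sum]; ring
    _ = M * A * ∑ i ∈ s, |α i - β i| := by simp only [abs_sub_comm]

lemma sum_abs_mul_mul_sub_mul_le (hz : ∀ i ∈ s, 0 ≤ z i) (hzM : ∀ i ∈ s, z i ≤ M)
    (hα : ∀ i ∈ s, 0 ≤ α i) (hβ : ∀ i ∈ s, 0 ≤ β i) (hsum : ∑ i ∈ s, α i = ∑ i ∈ s, β i) :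
    ∑ i ∈ s, |z i * ((∑ j ∈ s, z j * α j) * β i - (∑ j ∈ s, z j * β j) * α i)| ≤
      M * min (∑ j ∈ s, z j * α j) (∑ j ∈ s, z j * β j) * ∑ i ∈ s, |α i - β i| := by
  rcases le_total (∑ j ∈ s, z j * α j) (∑ j ∈ s, z j * β j) with hAB | hBA
  · rw [min_eq_left hAB]
    exact sum_abs_mul_mul_sub_mul_le_of_le hz hzM hα hsum hAB
  · rw [min_eq_right hBA]
    have := sum_abs_mul_mul_sub_mul_le_of_le hz hzM hβ hsum.symm hBA
    simp only [abs_sub_comm (β _) (α _)] at this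
    convert this using 2 with i
    rw [← abs_neg, ← mul_neg, neg_sub]

end L1Bound

lemma sum_filter_ne_div_sub_sum_filter_ne_div {ι : Type*} [Fintype ι] [DecidableEq ι]
    (u v : ι → ℝ) {K : ℝ} (hK : K ≠ 0) (hu : ∑ j, u j ≠ 0) (hv : ∑ j, v j ≠ 0) (i : ι) :
    (∑ j with j ≠ i, u j) / (K * ∑ j, u j) - (∑ j with j ≠ i, v j) / (K * ∑ j, v j) =
      ((∑ j, u j) * v i - (∑ j, v j) * u i) / (K * (∑ j, u j) * ∑ j, v j) := by
  rw [filter_ne', sum_erase_eq_sub (mem_univ i), sum_erase_eq_sub (mem_univ i)]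
  field_simp
  ring

lemma sum_abs_sum_filter_ne_div_sub_le {ι : Type*} [Fintype ι] [DecidableEq ι]
    {z α β : ι → ℝ} {K M : ℝ} (hK : 0 < K) (hz : ∀ i, 0 ≤ z i) (hzM : ∀ i, z i ≤ M)
    (hα : ∀ i, 0 ≤ α i) (hβ : ∀ i, 0 ≤ β i) (hsum : ∑ i, α i = ∑ i, β i)
    (hA : 0 < ∑ j, z j * α j) (hB : 0 < ∑ j, z j * β j) :
    ∑ i, |(∑ j with j ≠ i, z j * α j) / (K * ∑ j, z j * α j) -
        (∑ j with j ≠ i, z j * β j) / (K * ∑ j, z j * β j)| ≤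
      M / (K * ∑ j, z j * α j) * ∑ i, |α i - β i| := by
  have key := sum_abs_mul_mul_sub_mul_le (s := univ) (fun i _ => hz i) (fun i _ => hzM i)
    (fun i _ => hα i) (fun i _ => hβ i) hsum
  set A := ∑ j, z j * α j
  set B := ∑ j, z j * β j
  calc _ = (∑ i, |z i * (A * β i - B * α i)|) / (K * A * B) := by
        rw [sum_div]
        refine sum_congr rfl fun i _ => ?_
        rw [sum_filter_ne_div_sub_sum_filter_ne_div _ _ hK.ne' hA.ne' hB.ne', abs_div,
          abs_of_pos (mul_pos (mul_pos hK hA) hB)]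
        congr 2
        ring
    _ ≤ (M * B * ∑ i, |α i - β i|) / (K * A * B) := by
        obtain ⟨i, -⟩ := nonempty_of_sum_ne_zero hA.ne'
        have hM : 0 ≤ M := (hz i).trans (hzM i)
        gcongr
        exact key.trans (by gcongr; exact min_le_right A B)
    _ = M / (K * A) * ∑ i, |α i - β i| := by
        field_simp [hK.ne', hA.ne', hB.ne']

theorem stmt_17 (q b : ℕ) (hb : 1 ≤ b) (hqb : b < q)
    (γ : Fin (b - 1) → Fin q → ℝ)
    (hγsum : ∀ i, ∑ j, γ i j = 1)
    (hγb : ∀ i j, 0 ≤ γ i j ∧ γ i j ≤ 1 / ((q : ℝ) - 1))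
    (α β : Fin q → ℝ)
    (hαsum : ∑ j, α j = 1) (hβsum : ∑ j, β j = 1)
    (hαb : ∀ j, (1 / ((q : ℝ) - 1)) * (1 - 1 / ((q : ℝ) - b)) ≤ α j ∧
      α j ≤ 1 / ((q : ℝ) - 1))
    (hβb : ∀ j, (1 / ((q : ℝ) - 1)) * (1 - 1 / ((q : ℝ) - b)) ≤ β j ∧
      β j ≤ 1 / ((q : ℝ) - 1))
    (z : Fin q → ℝ) (hz : ∀ j, z j = ∏ i, γ i j)
    (A : ℝ) (hA : A = ∑ j, z j * α j) (hApos : 0 < A) :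
    ∑ i, |(∑ j ∈ Finset.univ.filter (fun j => j ≠ i), z j * α j) /
            (((q : ℝ) - 1) * ∑ j, z j * α j) -
          (∑ j ∈ Finset.univ.filter (fun j => j ≠ i), z j * β j) /
            (((q : ℝ) - 1) * ∑ j, z j * β j)| ≤
      (1 / (((q : ℝ) - 1) ^ b * A)) * ∑ j, |α j - β j| := by
  subst hA
  have hq : 1 < q := by omega
  have hK : (0 : ℝ) < q - 1 := by rw [sub_pos]; exact_mod_cast hq
  have hqb' : (1 : ℝ) ≤ q - b := by rw [le_sub_iff_add_le']; exact_mod_cast hqb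
  have hlow : 0 ≤ 1 / ((q : ℝ) - 1) * (1 - 1 / ((q : ℝ) - b)) :=
    mul_nonneg (one_div_nonneg.2 hK.le) (sub_nonneg.2 ((div_le_one (by linarith)).2 hqb'))
  have hα0 : ∀ j, 0 ≤ α j := fun j => hlow.trans (hαb j).1
  have hβ0 : ∀ j, 0 ≤ β j := fun j => hlow.trans (hβb j).1
  have hz0 : ∀ j, 0 ≤ z j := fun j => hz j ▸ prod_nonneg fun i _ => (hγb i j).1
  have hzM : ∀ j, z j ≤ (1 / ((q : ℝ) - 1)) ^ (b - 1) := fun j => by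
    rw [hz j]
    refine (prod_le_prod (fun i _ => (hγb i j).1) fun i _ => (hγb i j).2).trans_eq ?_
    simp
  have hB : 0 < ∑ j, z j * β j := by
    simpa only [hz] using sum_prod_mul_pos (by omega) γ hγsum hγb hβsum
      fun j => ⟨hβ0 j, (hβb j).2⟩
  calc _ ≤ (1 / ((q : ℝ) - 1)) ^ (b - 1) / ((q - 1) * ∑ j, z j * α j) * ∑ j, |α j - β j| :=
        sum_abs_sum_filter_ne_div_sub_le hK hz0 hzM hα0 hβ0 (hαsum.trans hβsum.symm) hApos hB
    _ = 1 / (((q : ℝ) - 1) ^ b * ∑ j, z j * α j) * ∑ j, |α j - β j| := by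
        rw [← pow_sub_one_mul (by omega : b ≠ 0), one_div_pow]
        field_simp
end

section
/- Let $f:(\mathbb{R}^4)^2 \to \mathbb{R}^4$ be defined by $(f(\gamma,\xi))_i = \frac{\sum_{j\neq i}\gamma_j\xi_j}{3\sum_j \gamma_j\xi_j}$. Let $\alpha,\beta$ be probability vectors on $[4]$ with all entries in $[1/6,1/3]$, each entry either $1/3$ or at most $11/36$, at most one entry equal to $1/3$, and such that $\alpha_i = 1/3 \iff \beta_i = 1/3$ for all $i$. Let $\gamma$ be a probability vector on $[4]$ with entries in $[1/6,1/3]$, each entry either $1/3$ or at most $11/36$, and at most one entry equal to $1/3$. Then $\|f(\alpha,\gamma) - f(\beta,\gamma)\|_1 \leq \frac{24}{49}\|\alpha-\beta\|_1$. -/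
/-!
Write `S = ∑ αⱼγⱼ` and `T = ∑ βⱼγⱼ`. Coordinatewise, `f(α,γ)ᵢ - f(β,γ)ᵢ = γᵢ(βᵢS - αᵢT)/(3ST)`,
and splitting `βᵢS - αᵢT = βᵢ(S - T) - (αᵢ - βᵢ)T` gives
`‖f(α,γ) - f(β,γ)‖₁ ≤ (∑ γⱼ|αⱼ - βⱼ| + |S - T|)/(3S)`. Since `∑ (αⱼ - βⱼ) = 0`, also
`|S - T| = |∑ (γⱼ - 1/3)(αⱼ - βⱼ)| ≤ ∑ (1/3 - γⱼ)|αⱼ - βⱼ|`, so the numerator is at most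
`‖α - β‖₁/3`.

It remains to bound `S` below. Centre at the uniform vector: `S = 1/4 + ∑ (αⱼ - 1/4)(γⱼ - 1/4)`.
On `[1/6, 11/36]` the parabola `(x - 1/4)²` lies below its chord, and one entry equal to `1/3`
costs an extra `1/216`, so `∑ (xⱼ - 1/4)² ≤ 5/216` for both `x = α` and `x = γ`, whence
`S ≥ 1/4 - 5/216 = 49/216` and `1/(9S) ≤ 24/49`.
-/

open Finset

section Lipschitz

variable {ι : Type*} [Fintype ι]

/-- The paper's `f(x, γ)`, with `∑_{j ≠ i} xⱼγⱼ` written as the full sum minus its `i`-th term. -/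
noncomputable def coloringUpdate (x γ : ι → ℝ) (i : ι) : ℝ :=
  (∑ j, x j * γ j - x i * γ i) / (3 * ∑ j, x j * γ j)

lemma abs_sub_div_sub_sub_div_le {S T a b g : ℝ} (hS : 0 < S) (hT : 0 < T) (hb : 0 ≤ b)
    (hg : 0 ≤ g) :
    |(S - a * g) / (3 * S) - (T - b * g) / (3 * T)| ≤
      (g * |a - b| + |S - T| * (b * g / T)) / (3 * S) := by
  have hsplit : (S - a * g) / (3 * S) - (T - b * g) / (3 * T) =
      (g * (b * (S - T)) / T - g * (a - b)) / (3 * S) := by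
    field_simp
    ring
  rw [hsplit, abs_div, abs_of_pos (by positivity : 0 < 3 * S)]
  gcongr
  calc |g * (b * (S - T)) / T - g * (a - b)|
      ≤ |g * (b * (S - T)) / T| + |g * (a - b)| := abs_sub _ _
    _ = g * |a - b| + |S - T| * (b * g / T) := by
      rw [abs_div, abs_mul, abs_mul, abs_mul, abs_of_nonneg hg, abs_of_nonneg hb,
        abs_of_pos hT]
      ring

lemma abs_sum_mul_sub_sum_mul_le {α β γ : ι → ℝ} {m : ℝ} (hsum : ∑ i, α i = ∑ i, β i)
    (hγ : ∀ i, γ i ≤ m) :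
    |∑ i, α i * γ i - ∑ i, β i * γ i| ≤ ∑ i, (m - γ i) * |α i - β i| := by
  have hshift : ∑ i, α i * γ i - ∑ i, β i * γ i = ∑ i, (γ i - m) * (α i - β i) := by
    have hzero : ∑ i, m * (α i - β i) = 0 := by
      rw [← mul_sum, sum_sub_distrib, hsum, sub_self, mul_zero]
    calc ∑ i, α i * γ i - ∑ i, β i * γ i
        = ∑ i, (γ i - m) * (α i - β i) + ∑ i, m * (α i - β i) := by
          rw [← sum_sub_distrib, ← sum_add_distrib]
          exact sum_congr rfl fun i _ => by ring
      _ = ∑ i, (γ i - m) * (α i - β i) := by rw [hzero, add_zero]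
  rw [hshift]
  refine (abs_sum_le_sum_abs _ _).trans_eq (sum_congr rfl fun i _ => ?_)
  rw [abs_mul, abs_of_nonpos (sub_nonpos.2 (hγ i)), neg_sub]

theorem sum_abs_coloringUpdate_sub_le {α β γ : ι → ℝ} {m : ℝ} (hsum : ∑ i, α i = ∑ i, β i)
    (hβ : ∀ i, 0 ≤ β i) (hγ : ∀ i, 0 ≤ γ i ∧ γ i ≤ m) (hS : 0 < ∑ i, α i * γ i)
    (hT : 0 < ∑ i, β i * γ i) :
    ∑ i, |coloringUpdate α γ i - coloringUpdate β γ i| ≤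
      m / (3 * ∑ i, α i * γ i) * ∑ i, |α i - β i| := by
  set S := ∑ i, α i * γ i
  set T := ∑ i, β i * γ i
  have hST := abs_sum_mul_sub_sum_mul_le hsum fun i => (hγ i).2
  calc ∑ i, |coloringUpdate α γ i - coloringUpdate β γ i|
      ≤ ∑ i, (γ i * |α i - β i| + |S - T| * (β i * γ i / T)) / (3 * S) :=
        sum_le_sum fun i _ => abs_sub_div_sub_sub_div_le hS hT (hβ i) (hγ i).1
    _ = (∑ i, γ i * |α i - β i| + |S - T|) / (3 * S) := by
        rw [← sum_div, sum_add_distrib, ← mul_sum, ← sum_div, div_self hT.ne', mul_one]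
    _ ≤ (∑ i, γ i * |α i - β i| + ∑ i, (m - γ i) * |α i - β i|) / (3 * S) := by
        gcongr
    _ = m / (3 * S) * ∑ i, |α i - β i| := by
        rw [← sum_add_distrib, div_mul_eq_mul_div]
        congr 1
        rw [mul_sum]
        exact sum_congr rfl fun i _ => by ring

end Lipschitz

section InnerProduct

lemma neg_le_sum_mul_of_sum_sq_le {ι : Type*} [Fintype ι] {a b : ι → ℝ} {r : ℝ}
    (ha : ∑ i, a i ^ 2 ≤ r) (hb : ∑ i, b i ^ 2 ≤ r) : -r ≤ ∑ i, a i * b i := by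
  have hexpand : ∑ i, (a i + b i) ^ 2 = ∑ i, a i ^ 2 + 2 * ∑ i, a i * b i + ∑ i, b i ^ 2 := by
    simp only [add_sq, sum_add_distrib, mul_sum, mul_assoc]
  have := sum_nonneg fun i (_ : i ∈ univ) => sq_nonneg (a i + b i)
  linarith

lemma sq_sub_quarter_le_chord {x : ℝ} (h₁ : 1 / 6 ≤ x) (h₂ : x ≤ 11 / 36) :
    (x - 1 / 4) ^ 2 ≤ 1 / 216 - (x - 1 / 4) / 36 := by
  nlinarith [mul_nonneg (sub_nonneg.2 h₁) (sub_nonneg.2 h₂)]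

lemma sum_sq_sub_quarter_le (x : Fin 4 → ℝ) (hsum : ∑ i, x i = 1) (hlow : ∀ i, 1 / 6 ≤ x i)
    (hgap : ∀ i, x i = 1 / 3 ∨ x i ≤ 11 / 36)
    (hone : (univ.filter (fun i => x i = (1 / 3 : ℝ))).card ≤ 1) :
    ∑ i, (x i - 1 / 4) ^ 2 ≤ 5 / 216 := by
  have hterm : ∀ i, (x i - 1 / 4) ^ 2 ≤
      1 / 216 - (x i - 1 / 4) / 36 + (if x i = 1 / 3 then 1 else 0) / 216 := by
    intro i
    by_cases h : x i = 1 / 3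
    · rw [if_pos h, h]; norm_num
    · rw [if_neg h, zero_div, add_zero]
      exact sq_sub_quarter_le_chord (hlow i) ((hgap i).resolve_left h)
  have hcount : ∑ i, (if x i = 1 / 3 then 1 else 0) / 216 ≤ (1 : ℝ) / 216 := by
    rw [← sum_div, sum_boole]
    gcongr
    exact_mod_cast hone
  have hchord : ∑ i, (1 / 216 - (x i - 1 / 4) / 36) = 4 / 216 := by
    rw [Fin.sum_univ_four] at hsum ⊢
    linarith
  calc ∑ i, (x i - 1 / 4) ^ 2
      ≤ ∑ i, (1 / 216 - (x i - 1 / 4) / 36 + (if x i = 1 / 3 then 1 else 0) / 216) :=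
        sum_le_sum fun i _ => hterm i
    _ ≤ 5 / 216 := by rw [sum_add_distrib]; linarith

lemma sum_mul_ge_49_div_216 (x g : Fin 4 → ℝ) (hxsum : ∑ i, x i = 1) (hgsum : ∑ i, g i = 1)
    (hxlow : ∀ i, 1 / 6 ≤ x i) (hglow : ∀ i, 1 / 6 ≤ g i)
    (hxgap : ∀ i, x i = 1 / 3 ∨ x i ≤ 11 / 36) (hggap : ∀ i, g i = 1 / 3 ∨ g i ≤ 11 / 36)
    (hxone : (univ.filter (fun i => x i = (1 / 3 : ℝ))).card ≤ 1)
    (hgone : (univ.filter (fun i => g i = (1 / 3 : ℝ))).card ≤ 1) :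
    49 / 216 ≤ ∑ i, x i * g i := by
  have hcentre : ∑ i, x i * g i = 1 / 4 + ∑ i, (x i - 1 / 4) * (g i - 1 / 4) := by
    rw [Fin.sum_univ_four] at hxsum hgsum ⊢
    rw [Fin.sum_univ_four]
    linear_combination (1 / 4 : ℝ) * hxsum + (1 / 4 : ℝ) * hgsum
  have := neg_le_sum_mul_of_sum_sq_le (sum_sq_sub_quarter_le x hxsum hxlow hxgap hxone)
    (sum_sq_sub_quarter_le g hgsum hglow hggap hgone)
  linarith

end InnerProduct

open scoped Classical in
theorem stmt_18_general (α β γ : Fin 4 → ℝ)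
    (hαsum : ∑ i, α i = 1) (hβsum : ∑ i, β i = 1) (hγsum : ∑ i, γ i = 1)
    (hαb : ∀ i, 1 / 6 ≤ α i ∧ α i ≤ 1 / 3)
    (hβb : ∀ i, 1 / 6 ≤ β i ∧ β i ≤ 1 / 3)
    (hγb : ∀ i, 1 / 6 ≤ γ i ∧ γ i ≤ 1 / 3)
    (hα' : ∀ i, α i = 1 / 3 ∨ α i ≤ 11 / 36)
    (hγ' : ∀ i, γ i = 1 / 3 ∨ γ i ≤ 11 / 36)
    (hα1 : (Finset.univ.filter (fun i => α i = (1 / 3 : ℝ))).card ≤ 1)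
    (hγ1 : (Finset.univ.filter (fun i => γ i = (1 / 3 : ℝ))).card ≤ 1) :
    ∑ i, |(∑ j ∈ Finset.univ.filter (fun j => j ≠ i), α j * γ j) /
            (3 * ∑ j, α j * γ j) -
          (∑ j ∈ Finset.univ.filter (fun j => j ≠ i), β j * γ j) /
            (3 * ∑ j, β j * γ j)| ≤
      (24 / 49) * ∑ i, |α i - β i| := by
  have hupdate : ∀ (x : Fin 4 → ℝ) i, (∑ j ∈ univ.filter (fun j => j ≠ i), x j * γ j) /
      (3 * ∑ j, x j * γ j) = coloringUpdate x γ i := fun x i => by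
    rw [coloringUpdate, filter_ne', sum_erase_eq_sub (mem_univ i)]
  simp only [hupdate]
  have hS := sum_mul_ge_49_div_216 α γ hαsum hγsum (fun i => (hαb i).1) (fun i => (hγb i).1) hα' hγ' hα1 hγ1
  have hT : 0 < ∑ i, β i * γ i :=
    sum_pos (fun i _ => mul_pos (by linarith [hβb i]) (by linarith [hγb i])) univ_nonempty
  calc _ ≤ (1 / 3) / (3 * ∑ i, α i * γ i) * ∑ i, |α i - β i| :=
        sum_abs_coloringUpdate_sub_le (hαsum.trans hβsum.symm)
          (fun i => by linarith [hβb i]) (fun i => ⟨by linarith [hγb i], (hγb i).2⟩)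
          (by linarith) hT
    _ ≤ 24 / 49 * ∑ i, |α i - β i| := by
        refine mul_le_mul_of_nonneg_right ?_ (sum_nonneg fun i _ => abs_nonneg _)
        rw [div_le_iff₀ (by linarith)]
        linarith

open scoped Classical in
theorem stmt_18 (α β γ : Fin 4 → ℝ)
    (hαsum : ∑ i, α i = 1) (hβsum : ∑ i, β i = 1) (hγsum : ∑ i, γ i = 1)
    (hαb : ∀ i, 1 / 6 ≤ α i ∧ α i ≤ 1 / 3)
    (hβb : ∀ i, 1 / 6 ≤ β i ∧ β i ≤ 1 / 3)
    (hγb : ∀ i, 1 / 6 ≤ γ i ∧ γ i ≤ 1 / 3)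
    (hα' : ∀ i, α i = 1 / 3 ∨ α i ≤ 11 / 36)
    (hβ' : ∀ i, β i = 1 / 3 ∨ β i ≤ 11 / 36)
    (hγ' : ∀ i, γ i = 1 / 3 ∨ γ i ≤ 11 / 36)
    (hα1 : (Finset.univ.filter (fun i => α i = (1 / 3 : ℝ))).card ≤ 1)
    (hβ1 : (Finset.univ.filter (fun i => β i = (1 / 3 : ℝ))).card ≤ 1)
    (hγ1 : (Finset.univ.filter (fun i => γ i = (1 / 3 : ℝ))).card ≤ 1)
    (hcoupled : ∀ i, α i = 1 / 3 ↔ β i = 1 / 3) :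
    ∑ i, |(∑ j ∈ Finset.univ.filter (fun j => j ≠ i), α j * γ j) /
            (3 * ∑ j, α j * γ j) -
          (∑ j ∈ Finset.univ.filter (fun j => j ≠ i), β j * γ j) /
            (3 * ∑ j, β j * γ j)| ≤
      (24 / 49) * ∑ i, |α i - β i| :=
  stmt_18_general α β γ hαsum hβsum hγsum hαb hβb hγb hα' hγ' hα1 hγ1
end

section
/- Define $(f(\gamma,\xi))_i = \frac{\sum_{j\neq i}\gamma_j\xi_j}{3\sum_j \gamma_j\xi_j}$ for $\gamma,\xi \in \mathbb{R}^4$. If $\gamma$ and $\xi$ are probability vectors on $[4]$, each with entries in $[0,1/3]$, at most one zero entry each, and $(f(\gamma,\xi))_i = (f(\gamma,\xi))_j = 1/3$ for some $i \neq j$, then $f(\gamma,\xi)$ is a permutation of $(1/6,1/6,1/3,1/3)$. -/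
lemma third_aux (γ : Fin 4 → ℝ) (hsum : ∑ i, γ i = 1)
    (hb : ∀ i, 0 ≤ γ i ∧ γ i ≤ 1 / 3) (m : Fin 4) (hm : γ m = 0) :
    ∀ k, k ≠ m → γ k = 1 / 3 := by
  intro k hk
  have h0 := hb 0; have h1 := hb 1; have h2 := hb 2; have h3 := hb 3
  rw [Fin.sum_univ_four] at hsum
  fin_cases m <;> fin_cases k <;> simp_all <;> linarith [hb 0, hb 1, hb 2, hb 3, (hb 0).2, (hb 1).2, (hb 2).2, (hb 3).2]

lemma two_zeros (γ : Fin 4 → ℝ) (i j : Fin 4) (hij : i ≠ j)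
    (hi : γ i = 0) (hj : γ j = 0) :
    2 ≤ (Finset.univ.filter (fun k => γ k = (0 : ℝ))).card := by
  classical
  have hsub : ({i, j} : Finset (Fin 4)) ⊆ Finset.univ.filter (fun k => γ k = (0 : ℝ)) := by
    intro x hx
    simp only [Finset.mem_insert, Finset.mem_singleton] at hx
    rcases hx with rfl | rfl <;> simp [hi, hj]
  calc 2 = ({i, j} : Finset (Fin 4)).card := (Finset.card_pair hij).symm
    _ ≤ _ := Finset.card_le_card hsub

open scoped Classical in
theorem stmt_19 (γ ξ : Fin 4 → ℝ)
    (hγsum : ∑ i, γ i = 1) (hξsum : ∑ i, ξ i = 1)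
    (hγb : ∀ i, 0 ≤ γ i ∧ γ i ≤ 1 / 3)
    (hξb : ∀ i, 0 ≤ ξ i ∧ ξ i ≤ 1 / 3)
    (hγ0 : (Finset.univ.filter (fun i => γ i = (0 : ℝ))).card ≤ 1)
    (hξ0 : (Finset.univ.filter (fun i => ξ i = (0 : ℝ))).card ≤ 1)
    (i j : Fin 4) (hij : i ≠ j)
    (hfi : (∑ k ∈ Finset.univ.filter (fun k => k ≠ i), γ k * ξ k) /
        (3 * ∑ k, γ k * ξ k) = 1 / 3)
    (hfj : (∑ k ∈ Finset.univ.filter (fun k => k ≠ j), γ k * ξ k) /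
        (3 * ∑ k, γ k * ξ k) = 1 / 3) :
    ∃ a b : Fin 4, a ≠ b ∧
      (∑ k ∈ Finset.univ.filter (fun k => k ≠ a), γ k * ξ k) /
          (3 * ∑ k, γ k * ξ k) = 1 / 6 ∧
      (∑ k ∈ Finset.univ.filter (fun k => k ≠ b), γ k * ξ k) /
          (3 * ∑ k, γ k * ξ k) = 1 / 6 ∧
      (∀ k, k ≠ a → k ≠ b →
        (∑ l ∈ Finset.univ.filter (fun l => l ≠ k), γ l * ξ l) /
            (3 * ∑ l, γ l * ξ l) = 1 / 3) := by
  have hsumi : ∀ a : Fin 4, (∑ k ∈ Finset.univ.filter (fun k => k ≠ a), γ k * ξ k)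
      = (∑ k, γ k * ξ k) - γ a * ξ a := by
    intro a
    rw [Finset.filter_ne', Finset.sum_erase_eq_sub (Finset.mem_univ a)]
  have hS : (3 : ℝ) * ∑ k, γ k * ξ k ≠ 0 := by
    intro h
    rw [h, div_zero] at hfi
    norm_num at hfi
  have hSne : (∑ k, γ k * ξ k) ≠ 0 := by
    intro h; exact hS (by rw [h]; ring)
  have hpi : γ i * ξ i = 0 := by
    rw [hsumi i, div_eq_iff hS] at hfi; linarith
  have hpj : γ j * ξ j = 0 := by
    rw [hsumi j, div_eq_iff hS] at hfj; linarith
  -- determine values off i,j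
  have h13 : ∀ k, k ≠ i → k ≠ j → γ k * ξ k = 1 / 9 := by
    rcases mul_eq_zero.mp hpi with hgi | hxi <;>
      rcases mul_eq_zero.mp hpj with hgj | hxj
    · exact absurd hγ0 (by have := two_zeros γ i j hij hgi hgj; omega)
    · intro k hki hkj
      rw [third_aux γ hγsum hγb i hgi k hki, third_aux ξ hξsum hξb j hxj k hkj]
      norm_num
    · intro k hki hkj
      rw [third_aux γ hγsum hγb j hgj k hkj, third_aux ξ hξsum hξb i hxi k hki]
      norm_num
    · exact absurd hξ0 (by have := two_zeros ξ i j hij hxi hxj; omega)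
  -- compute S
  have hsplit := Finset.sum_sdiff (f := fun k => γ k * ξ k)
    (Finset.subset_univ ({i, j} : Finset (Fin 4)))
  have hpair : ∑ k ∈ ({i, j} : Finset (Fin 4)), γ k * ξ k = 0 := by
    rw [Finset.sum_pair hij, hpi, hpj]; ring
  have hmem : ∀ k ∈ Finset.univ \ ({i, j} : Finset (Fin 4)), k ≠ i ∧ k ≠ j := by
    intro k hk
    simp only [Finset.mem_sdiff, Finset.mem_insert, Finset.mem_singleton] at hk
    exact ⟨fun h => hk.2 (Or.inl h), fun h => hk.2 (Or.inr h)⟩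
  have hcard : (Finset.univ \ ({i, j} : Finset (Fin 4))).card = 2 := by
    rw [Finset.card_sdiff_of_subset (Finset.subset_univ _), Finset.card_pair hij]
    simp
  have hrest : ∑ k ∈ Finset.univ \ ({i, j} : Finset (Fin 4)), γ k * ξ k = 2 / 9 := by
    rw [Finset.sum_congr rfl (fun k hk => h13 k (hmem k hk).1 (hmem k hk).2)]
    rw [Finset.sum_const, hcard]
    norm_num
  have hSval : (∑ k, γ k * ξ k) = 2 / 9 := by
    rw [← hsplit, hpair, hrest]; ring
  obtain ⟨a, b, hab, hset⟩ := Finset.card_eq_two.mp hcard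
  have ha : a ∈ Finset.univ \ ({i, j} : Finset (Fin 4)) := by
    rw [hset]; exact Finset.mem_insert_self a _
  have hb : b ∈ Finset.univ \ ({i, j} : Finset (Fin 4)) := by
    rw [hset]; exact Finset.mem_insert_of_mem (Finset.mem_singleton_self b)
  refine ⟨a, b, hab, ?_, ?_, ?_⟩
  · rw [hsumi a, hSval, h13 a (hmem a ha).1 (hmem a ha).2]; norm_num
  · rw [hsumi b, hSval, h13 b (hmem b hb).1 (hmem b hb).2]; norm_num
  · intro k hka hkb
    have hkij : k = i ∨ k = j := by
      by_contra h
      push_neg at h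
      have : k ∈ Finset.univ \ ({i, j} : Finset (Fin 4)) := by
        simp [h.1, h.2]
      rw [hset] at this
      simp only [Finset.mem_insert, Finset.mem_singleton] at this
      rcases this with rfl | rfl
      · exact hka rfl
      · exact hkb rfl
    have hpk : γ k * ξ k = 0 := by rcases hkij with rfl | rfl <;> assumption
    rw [hsumi k, hSval, hpk]; norm_num
end
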